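/- arXiv:1103.4019 — 8 statements merged into one kernel-verified Lean document; each statement's English description precedes it below -/
import Mathlib

section
/- Let X be a set with a finite cover S and let Γ be a curve family in X. For all exponents 1 ≤ p ≤ q and every ε > 0, the combinatorial moduli satisfy mod_q(Γ,S) ≤ (ε^{q−p} + ε^{−p} · sup_{s∈S} mod_q(Γ(s),S)) · mod_p(Γ,S), where Γ(s) = {γ ∈ Γ : γ ∩ s ≠ ∅}. -/
/-!
Normalize an admissible metric `ρ` so that every curve has length at least `1`; then
`V_p(ρ) ≈ mod_p(Γ,S)`. By Chebyshev's inequality at most `ε^{-p} V_p(ρ)` pieces carry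
`ρ ≥ ε`; for each of them take a nearly extremal metric for `Γ(s)`, which gives every curve
through `s` length at least `1`. On the other pieces `ρ ≤ ε` is dominated by
`ε^{1-p/q} ρ^{p/q}`, whose `q`-volume is `ε^{q-p} V_p(ρ)`. The pointwise maximum of all these
metrics is admissible for `Γ`, and its `q`-volume is at most the sum of their `q`-volumes.
-/

open scoped ENNReal
open Set

attribute [local instance] Classical.propDecidable

namespace CombModFin

variable {X : Type*}

/-- The `ρ`-length of a set `K`: the sum of `ρ s` over the elements `s` of the cover `S`
    meeting `K`. -/
noncomputable def len (S : Finset (Set X)) (ρ : Set X → ℝ≥0∞) (K : Set X) : ℝ≥0∞ :=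
  ∑ s ∈ S.filter fun s => (s ∩ K).Nonempty, ρ s

/-- `L_ρ(Γ,S)`: the infimum of the `ρ`-lengths of the curves of `Γ`. -/
noncomputable def Lmin (S : Finset (Set X)) (ρ : Set X → ℝ≥0∞) (Γ : Set (Set X)) : ℝ≥0∞ :=
  ⨅ γ ∈ Γ, len S ρ γ

/-- `V_p(ρ)`: the `p`-volume of the admissible metric `ρ`. -/
noncomputable def vol (S : Finset (Set X)) (ρ : Set X → ℝ≥0∞) (p : ℝ) : ℝ≥0∞ :=
  ∑ s ∈ S, ρ s ^ p

/-- An admissible metric: a function `ρ : S → [0,∞)` which is not identically zero on `S`. -/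
def Admissible (S : Finset (Set X)) (ρ : Set X → ℝ≥0∞) : Prop :=
  (∀ s ∈ S, ρ s ≠ ∞) ∧ ∃ s ∈ S, ρ s ≠ 0

/-- `mod_p(Γ,ρ,S) = V_p(ρ) / L_ρ(Γ,S)^p`. -/
noncomputable def modWith (S : Finset (Set X)) (Γ : Set (Set X)) (ρ : Set X → ℝ≥0∞)
    (p : ℝ) : ℝ≥0∞ :=
  vol S ρ p / Lmin S ρ Γ ^ p

/-- The combinatorial `p`-modulus: the infimum of `mod_p(Γ,ρ,S)` over admissible metrics `ρ`. -/
noncomputable def cmod (S : Finset (Set X)) (Γ : Set (Set X)) (p : ℝ) : ℝ≥0∞ :=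
  ⨅ (ρ : Set X → ℝ≥0∞) (_ : Admissible S ρ), modWith S Γ ρ p

variable {S : Finset (Set X)} {Γ : Set (Set X)} {ρ ρ' : Set X → ℝ≥0∞}
  {s K : Set X} {r : ℝ}

lemma len_ne_top (hρ : ∀ s ∈ S, ρ s ≠ ∞) (K : Set X) : len S ρ K ≠ ∞ :=
  ENNReal.sum_ne_top.2 fun s hs => hρ s (Finset.mem_filter.1 hs).1

lemma len_mono (h : ∀ s ∈ S, (s ∩ K).Nonempty → ρ s ≤ ρ' s) : len S ρ K ≤ len S ρ' K :=
  Finset.sum_le_sum fun s hs => h s (Finset.mem_filter.1 hs).1 (Finset.mem_filter.1 hs).2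

lemma le_len (hs : s ∈ S) (hK : (s ∩ K).Nonempty) : ρ s ≤ len S ρ K :=
  Finset.single_le_sum (fun _ _ => zero_le) (Finset.mem_filter.2 ⟨hs, hK⟩)

lemma len_eq_zero (hρ : ∀ s ∈ S, ρ s = 0) (K : Set X) : len S ρ K = 0 :=
  Finset.sum_eq_zero fun s hs => hρ s (Finset.mem_filter.1 hs).1

lemma len_const_mul (c : ℝ≥0∞) (K : Set X) : len S (fun t => c * ρ t) K = c * len S ρ K :=
  (Finset.mul_sum _ _ _).symm

lemma Lmin_le_len {γ : Set X} (hγ : γ ∈ Γ) : Lmin S ρ Γ ≤ len S ρ γ :=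
  iInf₂_le γ hγ

lemma vol_const_mul (c : ℝ≥0∞) (hr : 0 ≤ r) :
    vol S (fun t => c * ρ t) r = c ^ r * vol S ρ r := by
  simp only [vol, ENNReal.mul_rpow_of_nonneg _ _ hr, Finset.mul_sum]

lemma vol_rpow (θ r : ℝ) : vol S (fun t => ρ t ^ θ) r = vol S ρ (θ * r) := by
  simp only [vol, ENNReal.rpow_mul]

lemma vol_sup_le (hr : 0 ≤ r) : vol S (ρ ⊔ ρ') r ≤ vol S ρ r + vol S ρ' r := by
  rw [vol, vol, vol, ← Finset.sum_add_distrib]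
  refine Finset.sum_le_sum fun t _ => ?_
  rw [Pi.sup_apply, (ENNReal.monotone_rpow_of_nonneg hr).map_max]
  exact max_le le_self_add le_add_self

lemma vol_finset_sup_le {ι : Type*} (hr : 0 < r) (A : Finset ι) (f : ι → Set X → ℝ≥0∞) :
    vol S (A.sup f) r ≤ ∑ i ∈ A, vol S (f i) r :=
  A.apply_sup_le_sum (f := fun ρ => vol S ρ r)
    (by simp [vol, ENNReal.zero_rpow_of_pos hr]) (vol_sup_le hr.le)

lemma vol_ne_zero (hρ : Admissible S ρ) (hr : 0 < r) : vol S ρ r ≠ 0 := by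
  obtain ⟨s, hs, hρs⟩ := hρ.2
  rw [vol, Ne, Finset.sum_eq_zero_iff, not_forall₂]
  exact ⟨s, hs, by simp [ENNReal.rpow_eq_zero_iff, hρs, hr.le]⟩

lemma card_le_mul_vol {ε : ℝ≥0∞} (hε₀ : ε ≠ 0) (hε : ε ≠ ∞) (hr : 0 ≤ r) :
    ((S.filter fun s => ε ≤ ρ s).card : ℝ≥0∞) ≤ ε⁻¹ ^ r * vol S ρ r := by
  have hεr₀ : ε ^ r ≠ 0 := by simp [ENNReal.rpow_eq_zero_iff, hε₀, hε]
  rw [ENNReal.inv_rpow, ← ENNReal.div_eq_inv_mul,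
    ENNReal.le_div_iff_mul_le (Or.inl hεr₀) (Or.inl (ENNReal.rpow_ne_top_of_nonneg hr hε))]
  calc _ = ∑ _s ∈ S.filter fun s => ε ≤ ρ s, ε ^ r := by rw [Finset.sum_const, nsmul_eq_mul]
    _ ≤ ∑ s ∈ S.filter fun s => ε ≤ ρ s, ρ s ^ r :=
      Finset.sum_le_sum fun s hs => ENNReal.rpow_le_rpow (Finset.mem_filter.1 hs).2 hr
    _ ≤ vol S ρ r := Finset.sum_le_sum_of_subset (Finset.filter_subset _ _)

lemma modWith_le_vol (h : ∀ γ ∈ Γ, 1 ≤ len S ρ γ) (hr : 0 < r) :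
    modWith S Γ ρ r ≤ vol S ρ r :=
  ENNReal.div_le_of_le_mul (le_mul_of_one_le_right' (ENNReal.one_le_rpow (le_iInf₂ h) hr))

lemma cmod_le_modWith (hρ : Admissible S ρ) : cmod S Γ r ≤ modWith S Γ ρ r :=
  iInf₂_le ρ hρ

lemma admissible_single (hs : s ∈ S) : Admissible S (Pi.single s 1) :=
  ⟨fun t _ => by by_cases h : t = s <;> simp [h], s, hs, by simp⟩

lemma cmod_empty (hS : S.Nonempty) (hr : 0 < r) : cmod S ∅ r = 0 := by
  obtain ⟨s, hs⟩ := hS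
  refine le_antisymm ((cmod_le_modWith (admissible_single hs)).trans_eq ?_) zero_le
  simp [modWith, Lmin, ENNReal.top_rpow_of_pos hr]

lemma cmod_le_one (hs : s ∈ S) (hr : 0 < r) (hΓ : ∀ γ ∈ Γ, (s ∩ γ).Nonempty) :
    cmod S Γ r ≤ 1 := by
  refine (cmod_le_modWith (admissible_single hs)).trans
    ((modWith_le_vol (fun γ hγ => ?_) hr).trans ?_)
  · simpa using le_len (ρ := Pi.single s 1) hs (hΓ γ hγ)
  · simp [vol, Pi.single_apply, apply_ite (· ^ r), ENNReal.zero_rpow_of_pos hr, hs]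

lemma cmod_le_vol (hS : S.Nonempty) (hr : 0 < r) (hρ : ∀ s ∈ S, ρ s ≠ ∞)
    (h : ∀ γ ∈ Γ, 1 ≤ len S ρ γ) : cmod S Γ r ≤ vol S ρ r := by
  by_cases hρ₀ : ∃ s ∈ S, ρ s ≠ 0
  · exact (cmod_le_modWith ⟨hρ, hρ₀⟩).trans (modWith_le_vol h hr)
  push Not at hρ₀
  have hΓ : Γ = ∅ := eq_empty_of_forall_notMem fun γ hγ => by
    simpa [len_eq_zero hρ₀] using h γ hγ
  simp [hΓ, cmod_empty hS hr]

lemma exists_vol_le_modWith (hρ : Admissible S ρ) (hr : 0 < r) (hm : modWith S Γ ρ r ≠ ∞) :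
    ∃ ρ₁ : Set X → ℝ≥0∞, (∀ s ∈ S, ρ₁ s ≠ ∞) ∧ (∀ γ ∈ Γ, 1 ≤ len S ρ₁ γ) ∧
      vol S ρ₁ r ≤ modWith S Γ ρ r := by
  set L := Lmin S ρ Γ
  have hL₀ : L ≠ 0 := by
    rintro hL
    simp [modWith, L, hL, ENNReal.zero_rpow_of_pos hr, ENNReal.div_zero (vol_ne_zero hρ hr)] at hm
  by_cases hL : L = ∞
  · -- every curve has finite length, so `Γ` is empty
    refine ⟨0, by simp, fun γ hγ => absurd (top_le_iff.1 (hL ▸ Lmin_le_len hγ))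
      (len_ne_top hρ.1 γ), by simp [vol, ENNReal.zero_rpow_of_pos hr]⟩
  refine ⟨fun t => L⁻¹ * ρ t, fun t ht => ENNReal.mul_ne_top (by simpa) (hρ.1 t ht),
    fun γ hγ => ?_, ?_⟩
  · rw [len_const_mul, ← ENNReal.inv_mul_cancel hL₀ hL]
    exact mul_le_mul_right (Lmin_le_len hγ) _
  · rw [vol_const_mul _ hr.le, ENNReal.inv_rpow, mul_comm, ← div_eq_mul_inv]
    rfl

lemma exists_vol_lt_of_cmod_lt {c : ℝ≥0∞} (hr : 0 < r) (h : cmod S Γ r < c) :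
    ∃ g : Set X → ℝ≥0∞, (∀ s ∈ S, g s ≠ ∞) ∧ (∀ γ ∈ Γ, 1 ≤ len S g γ) ∧ vol S g r < c := by
  obtain ⟨ρ, hρ, hρc⟩ : ∃ ρ, Admissible S ρ ∧ modWith S Γ ρ r < c := by
    simpa [cmod, iInf_lt_iff] using h
  obtain ⟨g, hg, hlen, hvol⟩ := exists_vol_le_modWith hρ hr (ne_top_of_lt hρc)
  exact ⟨g, hg, hlen, hvol.trans_lt hρc⟩

lemma le_rpow_mul_rpow_of_le {x ε : ℝ≥0∞} {θ : ℝ} (hθ₀ : 0 ≤ θ) (hθ₁ : θ ≤ 1) (hx : x ≤ ε) :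
    x ≤ ε ^ (1 - θ) * x ^ θ :=
  calc x = x ^ (1 - θ) * x ^ θ := by
        rw [← ENNReal.rpow_add_of_nonneg _ _ (by linarith) hθ₀, sub_add_cancel, ENNReal.rpow_one]
    _ ≤ ε ^ (1 - θ) * x ^ θ := by gcongr

lemma cmod_le_of_forall_one_le_len {p q : ℝ} {ε M : ℝ≥0∞} (hS : S.Nonempty) (hp : 0 < p)
    (hpq : p ≤ q) (hε₀ : ε ≠ 0) (hε : ε ≠ ∞)
    (hM : ∀ s ∈ S, cmod S {γ ∈ Γ | (γ ∩ s).Nonempty} q < M)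
    (hρ : ∀ s ∈ S, ρ s ≠ ∞) (hlen : ∀ γ ∈ Γ, 1 ≤ len S ρ γ) :
    cmod S Γ q ≤ (ε ^ (q - p) + ε⁻¹ ^ p * M) * vol S ρ p := by
  have hq : 0 < q := hp.trans_le hpq
  have hθ₁ : p / q ≤ 1 := (div_le_one hq).2 hpq
  choose! g hg_fin hg_len hg_vol using fun s (hs : s ∈ S) => exists_vol_lt_of_cmod_lt hq (hM s hs)
  set A := S.filter fun s => ε ≤ ρ s
  set σ : Set X → ℝ≥0∞ := fun t => ε ^ (1 - p / q) * ρ t ^ (p / q)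
  have hσ_vol : vol S σ q = ε ^ (q - p) * vol S ρ p := by
    rw [vol_const_mul _ hq.le, vol_rpow, ← ENNReal.rpow_mul, div_mul_cancel₀ _ hq.ne', sub_mul,
      one_mul, div_mul_cancel₀ _ hq.ne']
  have hσ_fin : ∀ t ∈ S, σ t ≠ ∞ := fun t ht => ENNReal.mul_ne_top
    (ENNReal.rpow_ne_top_of_nonneg (by linarith) hε)
    (ENNReal.rpow_ne_top_of_nonneg (div_pos hp hq).le (hρ t ht))
  have hA_vol : ∑ s ∈ A, vol S (g s) q ≤ ε⁻¹ ^ p * vol S ρ p * M :=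
    calc ∑ s ∈ A, vol S (g s) q ≤ ∑ _s ∈ A, M :=
          Finset.sum_le_sum fun s hs => (hg_vol s (Finset.mem_filter.1 hs).1).le
      _ = A.card * M := by rw [Finset.sum_const, nsmul_eq_mul]
      _ ≤ ε⁻¹ ^ p * vol S ρ p * M := by gcongr; exact card_le_mul_vol hε₀ hε hp.le
  refine (cmod_le_vol hS hq (ρ := σ ⊔ A.sup g) (fun t ht => ?_) (fun γ hγ => ?_)).trans ?_
  · rw [Pi.sup_apply, Finset.sup_apply]
    exact max_ne_top (hσ_fin t ht) (Finset.sup_lt_iff (by simp) |>.2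
      fun s hs => (hg_fin s (Finset.mem_filter.1 hs).1 t ht).lt_top).ne
  · by_cases hA : ∃ s ∈ A, (γ ∩ s).Nonempty
    · obtain ⟨s, hs, hγs⟩ := hA
      refine (hg_len s (Finset.mem_filter.1 hs).1 γ ⟨hγ, hγs⟩).trans (len_mono fun t _ _ => ?_)
      exact (Finset.le_sup (f := g) hs t).trans le_sup_right
    · refine (hlen γ hγ).trans (len_mono fun t ht htγ => le_sup_of_le_left ?_)
      have htA : t ∉ A := fun htA => hA ⟨t, htA, inter_comm t γ ▸ htγ⟩
      have hρt : ρ t ≤ ε := (not_le.1 fun h => htA (Finset.mem_filter.2 ⟨ht, h⟩)).le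
      exact le_rpow_mul_rpow_of_le (div_pos hp hq).le hθ₁ hρt
  · calc vol S (σ ⊔ A.sup g) q ≤ vol S σ q + ∑ s ∈ A, vol S (g s) q :=
          (vol_sup_le hq.le).trans (add_le_add le_rfl (vol_finset_sup_le hq A g))
      _ ≤ ε ^ (q - p) * vol S ρ p + ε⁻¹ ^ p * vol S ρ p * M :=
          hσ_vol ▸ add_le_add le_rfl hA_vol
      _ = (ε ^ (q - p) + ε⁻¹ ^ p * M) * vol S ρ p := by ring

lemma cmod_le_mul_modWith {p q : ℝ} {ε M : ℝ≥0∞} (hp : 0 < p) (hpq : p ≤ q) (hε₀ : ε ≠ 0)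
    (hε : ε ≠ ∞) (hM : ∀ s ∈ S, cmod S {γ ∈ Γ | (γ ∩ s).Nonempty} q < M)
    (hρ : Admissible S ρ) :
    cmod S Γ q ≤ (ε ^ (q - p) + ε⁻¹ ^ p * M) * modWith S Γ ρ p := by
  by_cases hm : modWith S Γ ρ p = ∞
  · have : ε ^ (q - p) ≠ 0 := (ENNReal.rpow_pos (pos_iff_ne_zero.2 hε₀) hε).ne'
    simp [hm, ENNReal.mul_top, this]
  obtain ⟨ρ₁, hρ₁, hlen, hvol⟩ := exists_vol_le_modWith hρ hp hm
  obtain ⟨s, hs, -⟩ := hρ.2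
  exact (cmod_le_of_forall_one_le_len ⟨s, hs⟩ hp hpq hε₀ hε hM hρ₁ hlen).trans (by gcongr)

lemma le_mul_cmod {x C : ℝ≥0∞} (hC₀ : C ≠ 0) (hC : C ≠ ∞)
    (h : ∀ ρ, Admissible S ρ → x ≤ C * modWith S Γ ρ r) : x ≤ C * cmod S Γ r := by
  simp only [cmod, ENNReal.mul_iInf_of_ne hC₀ hC]
  exact le_iInf₂ h

end CombModFin

open Filter Topology in
lemma ENNReal.le_add_mul_mul_of_forall_gt {x a b c m : ℝ≥0∞} (ha : a ≠ 0) (hb : b ≠ ∞)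
    (hm : m ≠ ∞) (h : ∀ m', m < m' → m' ≠ ∞ → x ≤ (a + b * m') * c) :
    x ≤ (a + b * m) * c := by
  by_cases hc : c = ∞
  · simp [hc, ENNReal.mul_top, ha]
  have : (𝓝[>] m).NeBot := nhdsGT_neBot_of_exists_gt ⟨∞, hm.lt_top⟩
  have hlim : Tendsto (fun m' => (a + b * m') * c) (𝓝[>] m) (𝓝 ((a + b * m) * c)) :=
    (ENNReal.Tendsto.mul_const ((ENNReal.Tendsto.const_mul tendsto_id (Or.inr hb)).const_add a)
      (Or.inr hc)).mono_left nhdsWithin_le_nhds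
  refine ge_of_tendsto hlim ?_
  filter_upwards [Ioo_mem_nhdsGT hm.lt_top] with m' hm' using h m' hm'.1 hm'.2.ne

open CombModFin

theorem stmt0_general {X : Type*} (S : Finset (Set X)) (Γ : Set (Set X))
    (p q : ℝ) (hp : 1 ≤ p) (hpq : p ≤ q)
    (ε : ℝ≥0∞) (hε : 0 < ε) (hε' : ε ≠ ∞) :
    cmod S Γ q ≤
      (ε ^ (q - p) + ε⁻¹ ^ p * ⨆ s ∈ S, cmod S {γ ∈ Γ | (γ ∩ s).Nonempty} q) *
        cmod S Γ p := by
  have hp₀ : 0 < p := one_pos.trans_le hp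
  have hq₀ : 0 < q := hp₀.trans_le hpq
  have hεqp : ε ^ (q - p) ≠ 0 := (ENNReal.rpow_pos hε hε').ne'
  have hεp : ε⁻¹ ^ p ≠ ∞ := ENNReal.rpow_ne_top_of_nonneg hp₀.le (ENNReal.inv_ne_top.2 hε.ne')
  have hsup : ⨆ s ∈ S, cmod S {γ ∈ Γ | (γ ∩ s).Nonempty} q ≤ 1 :=
    iSup₂_le fun s hs => cmod_le_one hs hq₀ fun γ hγ => inter_comm s γ ▸ hγ.2
  refine ENNReal.le_add_mul_mul_of_forall_gt hεqp hεp (ne_top_of_le_ne_top ENNReal.one_ne_top hsup)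
    fun M hM hM_top => le_mul_cmod (by simp [hεqp]) ?_ fun ρ hρ => ?_
  · exact ENNReal.add_ne_top.2
      ⟨ENNReal.rpow_ne_top_of_nonneg (by linarith) hε', ENNReal.mul_ne_top hεp hM_top⟩
  · refine cmod_le_mul_modWith hp₀ hpq hε.ne' hε' (fun s hs => ?_) hρ
    exact (le_iSup₂ (f := fun s _ => cmod S {γ ∈ Γ | (γ ∩ s).Nonempty} q) s hs).trans_lt hM

/-- Dimension comparison for combinatorial moduli: for `1 ≤ p ≤ q` and `ε > 0`,
`mod_q(Γ,S) ≤ (ε^{q-p} + ε^{-p}·sup_{s∈S} mod_q(Γ(s),S))·mod_p(Γ,S)`, where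
`Γ(s)` is the family of curves of `Γ` meeting `s`. -/
theorem stmt0 {X : Type*} (S : Finset (Set X)) (hcover : ∀ x : X, ∃ s ∈ S, x ∈ s)
    (Γ : Set (Set X)) (hΓ : ∀ γ ∈ Γ, γ.Nonempty)
    (p q : ℝ) (hp : 1 ≤ p) (hpq : p ≤ q)
    (ε : ℝ≥0∞) (hε : 0 < ε) (hε' : ε ≠ ∞) :
    cmod S Γ q ≤
      (ε ^ (q - p) + ε⁻¹ ^ p * ⨆ s ∈ S, cmod S {γ ∈ Γ | (γ ∩ s).Nonempty} q) *
        cmod S Γ p :=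
  stmt0_general S Γ p q hp hpq ε hε hε'
end

section
/- Let S be a finite cover of a set X and Γ a nonempty curve family. If 1 ≤ p ≤ q, then mod_q(Γ,S) ≤ mod_p(Γ,S). -/
/-!
Given an admissible `ρ` with `0 < L := L_ρ(Γ,S) < ∞`, the metric `σ = min (ρ / L) 1` is admissible
and has `L_σ ≥ 1`: a curve either meets a cell where the cap `1` is active, or its `σ`-length is
its `ρ`-length divided by `L`. Since `σ ≤ 1` pointwise, `σ ^ q ≤ σ ^ p`, whence
`mod_q(Γ,σ) ≤ V_q(σ) ≤ V_p(σ) ≤ V_p(ρ) / L ^ p = mod_p(Γ,ρ)`. If `L = 0` then `mod_p(Γ,ρ) = ∞`.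
-/

open scoped ENNReal
open Set

attribute [local instance] Classical.propDecidable

namespace CombModFin

variable {X : Type*}

variable {S : Finset (Set X)} {Γ : Set (Set X)} {ρ : Set X → ℝ≥0∞}

noncomputable def truncDiv (ρ : Set X → ℝ≥0∞) (c : ℝ≥0∞) : Set X → ℝ≥0∞ :=
  fun s => min (ρ s / c) 1

lemma truncDiv_le_one (c : ℝ≥0∞) (s : Set X) : truncDiv ρ c s ≤ 1 :=
  min_le_right _ _

lemma len_lt_top (hρ : ∀ s ∈ S, ρ s ≠ ∞) (K : Set X) : len S ρ K < ∞ :=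
  ENNReal.sum_lt_top.2 fun s hs => (hρ s (Finset.mem_filter.1 hs).1).lt_top

lemma Lmin_lt_top (hρ : ∀ s ∈ S, ρ s ≠ ∞) (hΓ : Γ.Nonempty) : Lmin S ρ Γ < ∞ :=
  let ⟨γ, hγ⟩ := hΓ
  (biInf_le _ hγ).trans_lt (len_lt_top hρ γ)

lemma vol_ne_zero_s5 (hρ : ∃ s ∈ S, ρ s ≠ 0) {p : ℝ} (hp : 0 < p) : vol S ρ p ≠ 0 := by
  obtain ⟨s, hsS, hs⟩ := hρ
  intro hvol
  have hzero := Finset.sum_eq_zero_iff.1 hvol s hsS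
  rw [ENNReal.rpow_eq_zero_iff] at hzero
  rcases hzero with ⟨hρs, -⟩ | ⟨-, hneg⟩
  · exact hs hρs
  · exact hneg.not_gt hp

lemma modWith_eq_top_of_Lmin_eq_zero (hρ : ∃ s ∈ S, ρ s ≠ 0) {p : ℝ} (hp : 0 < p)
    (hL : Lmin S ρ Γ = 0) : modWith S Γ ρ p = ∞ := by
  rw [modWith, hL, ENNReal.zero_rpow_of_pos hp, ENNReal.div_zero (vol_ne_zero_s5 hρ hp)]

lemma modWith_le_vol_s5 {p : ℝ} (hp : 0 ≤ p) (hL : 1 ≤ Lmin S ρ Γ) : modWith S Γ ρ p ≤ vol S ρ p :=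
  ENNReal.div_le_of_le_mul (le_mul_of_one_le_right zero_le
    ((ENNReal.one_rpow p).symm.le.trans (ENNReal.rpow_le_rpow hL hp)))

lemma vol_le_vol_of_le_one (hρ : ∀ s ∈ S, ρ s ≤ 1) {p q : ℝ} (hpq : p ≤ q) :
    vol S ρ q ≤ vol S ρ p :=
  Finset.sum_le_sum fun s hs => ENNReal.rpow_le_rpow_of_exponent_ge (hρ s hs) hpq

lemma admissible_truncDiv (hρ : ∃ s ∈ S, ρ s ≠ 0) {c : ℝ≥0∞} (hc : c ≠ ∞) :
    Admissible S (truncDiv ρ c) := by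
  refine ⟨fun s _ => ne_top_of_le_ne_top ENNReal.one_ne_top (truncDiv_le_one c s), ?_⟩
  obtain ⟨s, hsS, hs⟩ := hρ
  exact ⟨s, hsS, (lt_min (ENNReal.div_pos hs hc) one_pos).ne'⟩

lemma vol_truncDiv_le (c : ℝ≥0∞) {p : ℝ} (hp : 0 ≤ p) :
    vol S (truncDiv ρ c) p ≤ vol S ρ p / c ^ p := by
  rw [vol, vol, div_eq_mul_inv, Finset.sum_mul]
  refine Finset.sum_le_sum fun s _ => ?_
  rw [← div_eq_mul_inv, ← ENNReal.div_rpow_of_nonneg _ _ hp]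
  exact ENNReal.rpow_le_rpow (min_le_left _ _) hp

lemma one_le_len_truncDiv {c : ℝ≥0∞} (hc0 : c ≠ 0) (hc : c ≠ ∞) {K : Set X}
    (hK : c ≤ len S ρ K) : 1 ≤ len S (truncDiv ρ c) K := by
  by_cases hcap : ∃ s ∈ S.filter fun s => (s ∩ K).Nonempty, 1 ≤ ρ s / c
  · obtain ⟨s, hs, hρs⟩ := hcap
    calc (1 : ℝ≥0∞) = truncDiv ρ c s := (min_eq_right hρs).symm
      _ ≤ len S (truncDiv ρ c) K := Finset.single_le_sum (fun _ _ => zero_le) hs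
  · push Not at hcap
    have hlen : len S (truncDiv ρ c) K = len S ρ K / c := by
      rw [len, len, div_eq_mul_inv, Finset.sum_mul]
      exact Finset.sum_congr rfl fun s hs => (min_eq_left (hcap s hs).le).trans (div_eq_mul_inv _ _)
    rwa [hlen, ENNReal.le_div_iff_mul_le (Or.inl hc0) (Or.inl hc), one_mul]

lemma one_le_Lmin_truncDiv {c : ℝ≥0∞} (hc0 : c ≠ 0) (hc : c ≠ ∞) (hcL : c ≤ Lmin S ρ Γ) :
    1 ≤ Lmin S (truncDiv ρ c) Γ :=
  le_iInf₂ fun _ hγ => one_le_len_truncDiv hc0 hc (hcL.trans (biInf_le _ hγ))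

end CombModFin

open CombModFin

theorem stmt5_general {X : Type*} (S : Finset (Set X))
    (Γ : Set (Set X)) (hΓne : Γ.Nonempty)
    (p q : ℝ) (hp : 1 ≤ p) (hpq : p ≤ q) :
    cmod S Γ q ≤ cmod S Γ p := by
  have hp0 : 0 < p := one_pos.trans_le hp
  refine le_iInf₂ fun ρ hρ => ?_
  set L := Lmin S ρ Γ
  have hL : L ≠ ∞ := (Lmin_lt_top hρ.1 hΓne).ne
  rcases eq_or_ne L 0 with hL0 | hL0
  · rw [modWith_eq_top_of_Lmin_eq_zero hρ.2 hp0 hL0]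
    exact le_top
  calc cmod S Γ q ≤ modWith S Γ (truncDiv ρ L) q := iInf₂_le _ (admissible_truncDiv hρ.2 hL)
    _ ≤ vol S (truncDiv ρ L) q :=
        modWith_le_vol_s5 (hp0.le.trans hpq) (one_le_Lmin_truncDiv hL0 hL le_rfl)
    _ ≤ vol S (truncDiv ρ L) p := vol_le_vol_of_le_one (fun s _ => truncDiv_le_one L s) hpq
    _ ≤ modWith S Γ ρ p := vol_truncDiv_le L hp0.le

/-- Monotonicity of the combinatorial modulus in the exponent: if `1 ≤ p ≤ q`, then
`mod_q(Γ,S) ≤ mod_p(Γ,S)`. -/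
theorem stmt5 {X : Type*} (S : Finset (Set X)) (hcover : ∀ x : X, ∃ s ∈ S, x ∈ s)
    (Γ : Set (Set X)) (hΓ : ∀ γ ∈ Γ, γ.Nonempty) (hΓne : Γ.Nonempty)
    (p q : ℝ) (hp : 1 ≤ p) (hpq : p ≤ q) :
    cmod S Γ q ≤ cmod S Γ p :=
  stmt5_general S Γ hΓne p q hp hpq
end

section
/- Let S be a finite cover of a set X, and let Γ and Γ' be nonempty curve families in X such that every curve of Γ intersects every curve of Γ' (γ ∩ γ' ≠ ∅ for all γ ∈ Γ, γ' ∈ Γ'). Then the combinatorial 2-moduli satisfy mod₂(Γ,S) · mod₂(Γ',S) ≤ 1. -/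
open scoped ENNReal
open Set

attribute [local instance] Classical.propDecidable

/-!
Choose a metric `r` of minimal volume `V = ∑ r²` among those giving every curve of `Γ` length at
least `1`; then `mod₂(Γ) ≤ V`. Minimality against the segment from `r` to the indicator `η` of the
sets meeting a curve `γ'` of `Γ'` (admissible for `Γ`, since `γ'` meets every curve of `Γ`) gives
`V ≤ ∑ r η = ℓ_r(γ')`, so `r / V` is admissible for `Γ'` and `mod₂(Γ') ≤ V / V² = 1 / V`.
-/

open Filter Topology in
theorem sum_sq_le_sum_mul_of_isMinOn {ι : Type*} {S : Finset ι} {K : Set (ι → ℝ)}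
    (hK : Convex ℝ K) {r η : ι → ℝ} (hr : r ∈ K)
    (hmin : IsMinOn (fun f => ∑ i ∈ S, f i ^ 2) K r) (hη : η ∈ K) :
    ∑ i ∈ S, r i ^ 2 ≤ ∑ i ∈ S, r i * η i := by
  set a := ∑ i ∈ S, r i * (η i - r i)
  set b := ∑ i ∈ S, (η i - r i) ^ 2
  have hexpand : ∀ t : ℝ, ∑ i ∈ S, (r + t • (η - r)) i ^ 2
      = ∑ i ∈ S, r i ^ 2 + t * (2 * a + t * b) := by
    intro t
    simp only [a, b, Pi.add_apply, Pi.smul_apply, Pi.sub_apply, smul_eq_mul, Finset.mul_sum,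
      ← Finset.sum_add_distrib]
    exact Finset.sum_congr rfl fun i _ => by ring
  have hpert : ∀ t ∈ Ioc (0 : ℝ) 1, 0 ≤ 2 * a + t * b := by
    intro t ht
    have := hmin (hK.add_smul_sub_mem hr hη (Ioc_subset_Icc_self ht))
    simp only [mem_ofPred_eq, hexpand] at this
    exact nonneg_of_mul_nonneg_right (by linarith) ht.1
  have hlim : Tendsto (fun t : ℝ => 2 * a + t * b) (𝓝[>] 0) (𝓝 (2 * a)) :=
    tendsto_nhdsWithin_of_tendsto_nhds <|
      Continuous.tendsto' (f := fun t : ℝ => 2 * a + t * b) (by fun_prop) 0 _ (by simp)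
  have ha : 0 ≤ a := by
    have := ge_of_tendsto hlim (mem_of_superset (Ioc_mem_nhdsGT one_pos) hpert)
    linarith
  have : a = ∑ i ∈ S, r i * η i - ∑ i ∈ S, r i ^ 2 := by
    simp only [a, ← Finset.sum_sub_distrib]
    exact Finset.sum_congr rfl fun i _ => by ring
  linarith

namespace CombModFin

variable {X : Type*}

theorem cmod_le_vol_div {S : Finset (Set X)} {Γ : Set (Set X)} {ρ : Set X → ℝ≥0∞}
    {p : ℝ} (hp : 0 ≤ p) (hρ : Admissible S ρ) {c : ℝ≥0∞} (hc : c ≤ Lmin S ρ Γ) :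
    cmod S Γ p ≤ vol S ρ p / c ^ p :=
  (iInf₂_le ρ hρ).trans (ENNReal.div_le_div_left (ENNReal.rpow_le_rpow hc hp) _)

noncomputable def lenReal (S : Finset (Set X)) (r : Set X → ℝ) (K : Set X) : ℝ :=
  ∑ s ∈ S.filter fun s => (s ∩ K).Nonempty, r s

theorem len_ofReal {S : Finset (Set X)} {r : Set X → ℝ} (hr : ∀ s, 0 ≤ r s) (K : Set X) :
    len S (fun s => ENNReal.ofReal (r s)) K = ENNReal.ofReal (lenReal S r K) :=
  (ENNReal.ofReal_sum_of_nonneg fun s _ => hr s).symm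

theorem vol_ofReal_two {S : Finset (Set X)} {r : Set X → ℝ} (hr : ∀ s, 0 ≤ r s) :
    vol S (fun s => ENNReal.ofReal (r s)) 2 = ENNReal.ofReal (∑ s ∈ S, r s ^ 2) := by
  rw [vol, ENNReal.ofReal_sum_of_nonneg fun s _ => sq_nonneg _]
  refine Finset.sum_congr rfl fun s _ => ?_
  rw [ENNReal.ofReal_rpow_of_nonneg (hr s) zero_le_two, Real.rpow_two]

theorem exists_pos_of_pos_lenReal {S : Finset (Set X)} {r : Set X → ℝ} {K : Set X}
    (h : 0 < lenReal S r K) : ∃ s ∈ S, 0 < r s := by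
  by_contra! hr
  exact h.not_ge (Finset.sum_nonpos fun s hs => hr s (Finset.mem_of_mem_filter s hs))

theorem cmod_two_le_of_le_lenReal {S : Finset (Set X)} {Γ : Set (Set X)} (hΓ : Γ.Nonempty)
    {r : Set X → ℝ} (hr : ∀ s, 0 ≤ r s) {c : ℝ} (hc : 0 < c)
    (hlen : ∀ γ ∈ Γ, c ≤ lenReal S r γ) :
    cmod S Γ 2 ≤ ENNReal.ofReal ((∑ s ∈ S, r s ^ 2) / c ^ 2) := by
  obtain ⟨γ₀, hγ₀⟩ := hΓ
  have hadm : Admissible S fun s => ENNReal.ofReal (r s) := by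
    obtain ⟨s, hs, hlt⟩ := exists_pos_of_pos_lenReal (hc.trans_le (hlen γ₀ hγ₀))
    exact ⟨fun _ _ => ENNReal.ofReal_ne_top, s, hs, ENNReal.ofReal_pos.2 hlt |>.ne'⟩
  have hLmin : ENNReal.ofReal c ≤ Lmin S (fun s => ENNReal.ofReal (r s)) Γ :=
    le_iInf₂ fun γ hγ => (len_ofReal hr γ).symm ▸ ENNReal.ofReal_le_ofReal (hlen γ hγ)
  calc cmod S Γ 2 ≤ ENNReal.ofReal (∑ s ∈ S, r s ^ 2) / ENNReal.ofReal c ^ (2 : ℝ) := by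
        simpa only [vol_ofReal_two hr] using cmod_le_vol_div zero_le_two hadm hLmin
    _ = ENNReal.ofReal ((∑ s ∈ S, r s ^ 2) / c ^ 2) := by
        rw [ENNReal.ofReal_rpow_of_nonneg hc.le zero_le_two, Real.rpow_two,
          ENNReal.ofReal_div_of_pos (by positivity)]

/-- Capping values at `1` makes the set compact while keeping the indicator metrics in it. -/
def feasible (S : Finset (Set X)) (Γ : Set (Set X)) : Set (Set X → ℝ) :=
  univ.pi (fun _ => Icc 0 1) ∩ ⋂ γ ∈ Γ, {r | 1 ≤ lenReal S r γ}

theorem mem_feasible {S : Finset (Set X)} {Γ : Set (Set X)} {r : Set X → ℝ} :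
    r ∈ feasible S Γ ↔ (∀ s, r s ∈ Icc 0 1) ∧ ∀ γ ∈ Γ, 1 ≤ lenReal S r γ := by
  simp [feasible, Pi.le_def, forall_and]

theorem isCompact_feasible (S : Finset (Set X)) (Γ : Set (Set X)) :
    IsCompact (feasible S Γ) :=
  (isCompact_univ_pi fun _ => isCompact_Icc).inter_right <| isClosed_biInter fun _ _ =>
    isClosed_le continuous_const (continuous_finsetSum _ fun s _ => continuous_apply s)

theorem convex_feasible (S : Finset (Set X)) (Γ : Set (Set X)) :
    Convex ℝ (feasible S Γ) := by
  refine (convex_pi fun _ _ => convex_Icc 0 1).inter (convex_iInter₂ fun γ _ => ?_)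
  intro r hr r' hr' a b ha hb hab
  simp only [mem_ofPred_eq, lenReal, Pi.add_apply, Pi.smul_apply, smul_eq_mul,
    Finset.sum_add_distrib, ← Finset.mul_sum] at hr hr' ⊢
  nlinarith

theorem lenReal_eq_sum_mul_indicator (S : Finset (Set X)) (r : Set X → ℝ) (K : Set X) :
    lenReal S r K = ∑ s ∈ S, r s * {s : Set X | (s ∩ K).Nonempty}.indicator 1 s := by
  simp only [lenReal, Finset.sum_filter, indicator_apply, mem_ofPred_eq, Pi.one_apply, mul_ite,
    mul_one, mul_zero]

theorem indicator_mem_feasible {S : Finset (Set X)} (hcover : ∀ x : X, ∃ s ∈ S, x ∈ s)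
    {Γ : Set (Set X)} {γ' : Set X} (hmeet : ∀ γ ∈ Γ, (γ ∩ γ').Nonempty) :
    {s : Set X | (s ∩ γ').Nonempty}.indicator 1 ∈ feasible S Γ := by
  set η : Set X → ℝ := {s : Set X | (s ∩ γ').Nonempty}.indicator 1
  have hη : ∀ s, η s ∈ Icc 0 1 := fun s => by
    by_cases h : (s ∩ γ').Nonempty <;> simp [η, h]
  refine mem_feasible.2 ⟨hη, fun γ hγ => ?_⟩
  obtain ⟨x, hxγ, hxγ'⟩ := hmeet γ hγ
  obtain ⟨s, hs, hxs⟩ := hcover x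
  calc (1 : ℝ) = η s := (indicator_of_mem (show s ∈ {s : Set X | (s ∩ γ').Nonempty} from
        ⟨x, hxs, hxγ'⟩) (1 : Set X → ℝ)).symm
    _ ≤ lenReal S η γ := Finset.single_le_sum (fun s _ => (hη s).1)
        (Finset.mem_filter.2 ⟨hs, show (s ∩ γ).Nonempty from ⟨x, hxs, hxγ⟩⟩)

theorem exists_sum_sq_le_lenReal {S : Finset (Set X)} (hcover : ∀ x : X, ∃ s ∈ S, x ∈ s)
    {Γ Γ' : Set (Set X)} (hΓ' : Γ'.Nonempty) (hmeet : ∀ γ ∈ Γ, ∀ γ' ∈ Γ', (γ ∩ γ').Nonempty) :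
    ∃ r ∈ feasible S Γ, ∀ γ' ∈ Γ', ∑ s ∈ S, r s ^ 2 ≤ lenReal S r γ' := by
  have hmeet' : ∀ γ' ∈ Γ', ∀ γ ∈ Γ, (γ ∩ γ').Nonempty := fun γ' hγ' γ hγ => hmeet γ hγ γ' hγ'
  obtain ⟨γ'₀, hγ'₀⟩ := hΓ'
  obtain ⟨r, hr, hmin⟩ := (isCompact_feasible S Γ).exists_isMinOn
    ⟨_, indicator_mem_feasible hcover (hmeet' γ'₀ hγ'₀)⟩
    (continuous_finsetSum S fun s _ => (continuous_apply s).pow 2).continuousOn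
  refine ⟨r, hr, fun γ' hγ' => ?_⟩
  rw [lenReal_eq_sum_mul_indicator]
  exact sum_sq_le_sum_mul_of_isMinOn (convex_feasible S Γ) hr hmin
    (indicator_mem_feasible hcover (hmeet' γ' hγ'))

end CombModFin

open CombModFin

theorem stmt8_general {X : Type*} (S : Finset (Set X)) (hcover : ∀ x : X, ∃ s ∈ S, x ∈ s)
    (Γ Γ' : Set (Set X))
    (hΓne : Γ.Nonempty) (hΓ'ne : Γ'.Nonempty)
    (hmeet : ∀ γ ∈ Γ, ∀ γ' ∈ Γ', (γ ∩ γ').Nonempty) :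
    cmod S Γ (2 : ℝ) * cmod S Γ' (2 : ℝ) ≤ 1 := by
  obtain ⟨r, hrK, hrΓ'⟩ := exists_sum_sq_le_lenReal hcover hΓ'ne hmeet
  obtain ⟨hr01, hrΓ⟩ := mem_feasible.1 hrK
  have hr : ∀ s, 0 ≤ r s := fun s => (hr01 s).1
  set V := ∑ s ∈ S, r s ^ 2
  have hV : 0 < V := by
    obtain ⟨γ₀, hγ₀⟩ := hΓne
    obtain ⟨s, hs, hpos⟩ := exists_pos_of_pos_lenReal (one_pos.trans_le (hrΓ γ₀ hγ₀))
    exact Finset.sum_pos' (fun s _ => sq_nonneg (r s)) ⟨s, hs, pow_pos hpos 2⟩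
  calc cmod S Γ 2 * cmod S Γ' 2
      ≤ ENNReal.ofReal (V / 1 ^ 2) * ENNReal.ofReal (V / V ^ 2) :=
        mul_le_mul' (cmod_two_le_of_le_lenReal hΓne hr one_pos hrΓ)
          (cmod_two_le_of_le_lenReal hΓ'ne hr hV hrΓ')
    _ = 1 := by
        rw [← ENNReal.ofReal_mul (by positivity)]
        field_simp
        simp

/-- If every curve of `Γ` meets every curve of `Γ'`, then the combinatorial `2`-moduli
satisfy `mod₂(Γ,S) · mod₂(Γ',S) ≤ 1`. -/
theorem stmt8 {X : Type*} (S : Finset (Set X)) (hcover : ∀ x : X, ∃ s ∈ S, x ∈ s)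
    (Γ Γ' : Set (Set X)) (hΓ : ∀ γ ∈ Γ, γ.Nonempty) (hΓ' : ∀ γ ∈ Γ', γ.Nonempty)
    (hΓne : Γ.Nonempty) (hΓ'ne : Γ'.Nonempty)
    (hmeet : ∀ γ ∈ Γ, ∀ γ' ∈ Γ', (γ ∩ γ').Nonempty) :
    cmod S Γ (2 : ℝ) * cmod S Γ' (2 : ℝ) ≤ 1 :=
  stmt8_general S hcover Γ Γ' hΓne hΓ'ne hmeet
end

section
/- Let (Z,d) be a metric space and μ a doubling Borel measure on Z, i.e. there is a constant C ≥ 1 such that 0 < μ(B(x,2r)) ≤ C·μ(B(x,r)) < ∞ for all x ∈ Z and r > 0. Let A ⊆ Z and let a ∈ A be an m-density point of A, meaning lim_{r→0} μ(A ∩ B(a,r))/μ(B(a,r)) = 1 (where μ is applied to arbitrary sets via the induced outer measure). Then a is a t-density point of A: for every ε > 0, lim_{r→0} (1/r) · sup_{z ∈ B(a,r)} dist(z, A ∩ B(a,(1+ε)r)) = 0. -/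
/-!
Fix `ε > 0` and a small `δ > 0`. If some `z ∈ B(a,r)` were at distance `> δr` from
`A ∩ B(a,(1+ε)r)`, the ball `B(z,δr)` would sit inside `B(a,(1+ε)r)` and miss `A`. Since
`B(a,(1+ε)r) ⊆ B(z,2^k δr)` for a `k` depending only on `ε` and `δ`, doubling gives
`μ(B(a,(1+ε)r)) ≤ C^k μ(B(z,δr))`, so `A` would miss a fixed proportion `C^{-k}` of
`B(a,(1+ε)r)`, contradicting density `1` at `a` for small `r`.
-/

open scoped ENNReal Topology
open Set Metric Filter MeasureTheory

section DoublingBalls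

variable {Z : Type*} [MetricSpace Z] [MeasurableSpace Z]

theorem measure_ball_two_pow_mul_le {μ : Measure Z} {C : ℝ≥0∞}
    (hdouble : ∀ (x : Z) (r : ℝ), 0 < r → μ (ball x (2 * r)) ≤ C * μ (ball x r))
    (k : ℕ) (x : Z) {r : ℝ} (hr : 0 < r) :
    μ (ball x (2 ^ k * r)) ≤ C ^ k * μ (ball x r) := by
  induction k with
  | zero => simp
  | succ k ih =>
    calc μ (ball x (2 ^ (k + 1) * r)) = μ (ball x (2 * (2 ^ k * r))) := by ring_nf
      _ ≤ C * μ (ball x (2 ^ k * r)) := hdouble x _ (by positivity)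
      _ ≤ C * (C ^ k * μ (ball x r)) := by gcongr
      _ = C ^ (k + 1) * μ (ball x r) := by ring

theorem measure_add_measure_ball_le_of_le_infDist [OpensMeasurableSpace Z] (μ : Measure Z)
    {S U : Set Z} {z : Z} {ρ : ℝ} (hS : S ⊆ U) (hball : ball z ρ ⊆ U)
    (hρ : ρ ≤ infDist z S) :
    μ S + μ (ball z ρ) ≤ μ U := by
  have hdisj : Disjoint S (ball z ρ) := by
    refine Set.disjoint_left.mpr fun w hwS hwz => ?_
    have := infDist_le_dist_of_mem (x := z) hwS
    rw [mem_ball, dist_comm] at hwz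
    linarith
  rw [← measure_union hdisj measurableSet_ball]
  exact measure_mono (union_subset hS hball)

theorem measure_le_one_sub_inv_mul_of_le_infDist [OpensMeasurableSpace Z] (μ : Measure Z)
    {S U : Set Z} {z : Z} {ρ : ℝ} {K : ℝ≥0∞} (hS : S ⊆ U) (hball : ball z ρ ⊆ U)
    (hρ : ρ ≤ infDist z S) (hU : μ U ≠ ∞) (hK : μ U ≤ K * μ (ball z ρ)) :
    μ S ≤ (1 - K⁻¹) * μ U := by
  have hsum := measure_add_measure_ball_le_of_le_infDist μ hS hball hρ
  have hball_fin : μ (ball z ρ) ≠ ∞ := ne_top_of_le_ne_top hU (measure_mono hball)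
  calc μ S ≤ μ U - μ (ball z ρ) := ENNReal.le_sub_of_add_le_right hball_fin hsum
    _ ≤ μ U - K⁻¹ * μ U := by
      gcongr
      rw [← ENNReal.div_eq_inv_mul]
      exact ENNReal.div_le_of_le_mul' hK
    _ = (1 - K⁻¹) * μ U := by rw [ENNReal.sub_mul fun _ _ => hU, one_mul]

theorem infDist_inter_ball_le_of_density_gt [OpensMeasurableSpace Z] {μ : Measure Z}
    {C : ℝ≥0∞} (hdouble : ∀ (x : Z) (r : ℝ), 0 < r → μ (ball x (2 * r)) ≤ C * μ (ball x r))
    {A : Set Z} {a z : Z} {ε δ r : ℝ} {k : ℕ} (hδ : 0 < δ) (hδε : δ ≤ ε)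
    (hk : 2 + ε ≤ 2 ^ k * δ) (hr : 0 < r) (hfin : μ (ball a ((1 + ε) * r)) ≠ ∞)
    (hdens : 1 - (C ^ k)⁻¹ < μ (A ∩ ball a ((1 + ε) * r)) / μ (ball a ((1 + ε) * r)))
    (hz : z ∈ ball a r) :
    infDist z (A ∩ ball a ((1 + ε) * r)) ≤ δ * r := by
  rw [mem_ball] at hz
  by_contra! hfar
  have hinner : ball z (δ * r) ⊆ ball a ((1 + ε) * r) := fun w hw => by
    rw [mem_ball] at hw ⊢
    nlinarith [dist_triangle w z a]
  have houter : ball a ((1 + ε) * r) ⊆ ball z (2 ^ k * (δ * r)) := fun w hw => by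
    rw [mem_ball] at hw ⊢
    nlinarith [dist_triangle w a z, dist_comm a z]
  refine hdens.not_ge (ENNReal.div_le_of_le_mul ?_)
  refine measure_le_one_sub_inv_mul_of_le_infDist μ inter_subset_right hinner hfar.le hfin ?_
  exact (measure_mono houter).trans
    (measure_ball_two_pow_mul_le hdouble k z (mul_pos hδ hr))

theorem eventually_infDist_inter_ball_le_mul [OpensMeasurableSpace Z] {μ : Measure Z}
    {C : ℝ≥0∞} (hdouble : ∀ (x : Z) (r : ℝ), 0 < r → μ (ball x (2 * r)) ≤ C * μ (ball x r))
    (hC : C ≠ ∞) {A : Set Z} {a : Z} (hfin : ∀ r > 0, μ (ball a r) ≠ ∞)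
    (hm : Tendsto (fun r => μ (A ∩ ball a r) / μ (ball a r)) (𝓝[>] 0) (𝓝 1))
    {ε : ℝ} (hε : 0 < ε) (δ : ℝ) (hδ : 0 < δ) :
    ∀ᶠ r in 𝓝[>] 0, ∀ z ∈ ball a r, infDist z (A ∩ ball a ((1 + ε) * r)) ≤ δ * r := by
  set δ' := min δ ε
  have hδ' : 0 < δ' := lt_min hδ hε
  obtain ⟨k, hk⟩ := pow_unbounded_of_one_lt ((2 + ε) / δ') one_lt_two
  rw [div_lt_iff₀ hδ'] at hk
  have hgap : 1 - (C ^ k)⁻¹ < 1 :=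
    ENNReal.sub_lt_self ENNReal.one_ne_top one_ne_zero
      (ENNReal.inv_ne_zero.mpr (ENNReal.pow_ne_top hC))
  filter_upwards [eventually_nhdsGT_zero_mul_left (by linarith : (0 : ℝ) < 1 + ε)
      (hm.eventually (lt_mem_nhds hgap)), self_mem_nhdsWithin] with r hdens hr z hz
  calc infDist z (A ∩ ball a ((1 + ε) * r)) ≤ δ' * r :=
        infDist_inter_ball_le_of_density_gt hdouble hδ' (min_le_right δ ε) hk.le hr
          (hfin _ (mul_pos (by linarith) hr)) hdens hz
    _ ≤ δ * r := mul_le_mul_of_nonneg_right (min_le_left δ ε) hr.le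

end DoublingBalls

theorem tendsto_one_div_mul_iSup_nhdsGT_zero {ι : Type*} (s : ℝ → Set ι) {g : ℝ → ι → ℝ}
    (hg : ∀ r i, 0 ≤ g r i)
    (h : ∀ δ > 0, ∀ᶠ r in 𝓝[>] 0, ∀ i ∈ s r, g r i ≤ δ * r) :
    Tendsto (fun r => (1 / r) * ⨆ i ∈ s r, g r i) (𝓝[>] 0) (𝓝 0) := by
  rw [Metric.tendsto_nhds]
  intro δ hδ
  filter_upwards [h (δ / 2) (half_pos hδ), self_mem_nhdsWithin] with r hle hr
  rw [mem_Ioi] at hr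
  have hsup_nonneg : 0 ≤ ⨆ i ∈ s r, g r i :=
    Real.iSup_nonneg fun i => Real.iSup_nonneg fun _ => hg r i
  have hsup_le : ⨆ i ∈ s r, g r i ≤ δ / 2 * r :=
    Real.iSup_le (fun i => Real.iSup_le (hle i) (by positivity)) (by positivity)
  have hbound : (1 / r) * ⨆ i ∈ s r, g r i ≤ δ / 2 := by
    rw [one_div_mul_eq_div, div_le_iff₀ hr]
    exact hsup_le
  rw [Real.dist_eq, sub_zero, abs_of_nonneg (by positivity)]
  linarith

theorem stmt9_general {Z : Type*} [MetricSpace Z] [MeasurableSpace Z] [BorelSpace Z]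
    (μ : MeasureTheory.Measure Z)
    (C : ℝ≥0∞)
    (hdoubling : ∀ (x : Z) (r : ℝ), 0 < r →
      0 < μ (ball x (2 * r)) ∧ μ (ball x (2 * r)) ≤ C * μ (ball x r) ∧
        C * μ (ball x r) < ∞)
    (A : Set Z) (a : Z)
    (hm : Tendsto (fun r : ℝ => μ (A ∩ ball a r) / μ (ball a r))
      (nhdsWithin 0 (Set.Ioi 0)) (nhds 1)) :
    ∀ ε : ℝ, 0 < ε →
      Tendsto
        (fun r : ℝ =>
          (1 / r) * ⨆ z ∈ ball a r, infDist z (A ∩ ball a ((1 + ε) * r)))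
        (nhdsWithin 0 (Set.Ioi 0)) (nhds 0) := by
  intro ε hε
  have hdouble x r hr := (hdoubling x r hr).2.1
  have hfin : ∀ r > 0, μ (ball a r) ≠ ∞ := fun r hr => by
    obtain ⟨-, hle, hlt⟩ := hdoubling a (r / 2) (half_pos hr)
    rw [mul_div_cancel₀ r two_ne_zero] at hle
    exact (hle.trans_lt hlt).ne
  have hC : C ≠ ∞ := by
    rintro rfl
    obtain ⟨hpos, hle, hlt⟩ := hdoubling a 1 one_pos
    have hnull : μ (ball a 1) = 0 := by simpa using ENNReal.mul_lt_top_iff.mp hlt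
    rw [hnull, mul_zero, nonpos_iff_eq_zero] at hle
    exact hpos.ne' hle
  exact tendsto_one_div_mul_iSup_nhdsGT_zero (ball a) (fun _ _ => infDist_nonneg)
    (eventually_infDist_inter_ball_le_mul hdouble hC hfin hm hε)

/-- For a doubling Borel measure, every `m`-density point of a set `A` is a `t`-density
point: for all `ε > 0`, `(1/r)·sup_{z∈B(a,r)} dist(z, A ∩ B(a,(1+ε)r)) → 0` as `r → 0`. -/
theorem stmt9 {Z : Type*} [MetricSpace Z] [MeasurableSpace Z] [BorelSpace Z]
    (μ : MeasureTheory.Measure Z)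
    (C : ℝ≥0∞) (hC : 1 ≤ C)
    (hdoubling : ∀ (x : Z) (r : ℝ), 0 < r →
      0 < μ (ball x (2 * r)) ∧ μ (ball x (2 * r)) ≤ C * μ (ball x r) ∧
        C * μ (ball x r) < ∞)
    (A : Set Z) (a : Z) (ha : a ∈ A)
    (hm : Tendsto (fun r : ℝ => μ (A ∩ ball a r) / μ (ball a r))
      (nhdsWithin 0 (Set.Ioi 0)) (nhds 1)) :
    ∀ ε : ℝ, 0 < ε →
      Tendsto
        (fun r : ℝ =>
          (1 / r) * ⨆ z ∈ ball a r, infDist z (A ∩ ball a ((1 + ε) * r)))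
        (nhdsWithin 0 (Set.Ioi 0)) (nhds 0) :=
  stmt9_general μ C hdoubling A a hm
end

section
/- (Filling-in.) Let X be an unbounded, proper, L-annularly linearly connected metric space, let K ⊆ X be a compact set with diam K > 0, and let x ∈ K. Then all points of X at distance greater than 2L·diam K from x lie in a single connected component of X ∖ K; in particular the union of K with all the other components of X ∖ K is a compact set contained in the closed ball of radius 2L·diam K about x. -/
open Set Metric

/-!
Put `r = 2L·diam K`. Two points at distance at least `r` from `x` are joined, by (ALC2) in a
large annulus around `x`, by a continuum avoiding `B(x, r/L) = B(x, 2·diam K) ⊇ K`; hence all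
points outside `B̄(x, r)` lie in one component `Ω` of `X ∖ K`. Since (BT) makes `X` locally
connected, `Ω` is open, so `X ∖ Ω` is a closed subset of the compact ball `B̄(x, r)`.
-/

/-- An arc in a metric space: an injective continuous map defined on `[0,1]`. -/
def IsArc {X : Type*} [MetricSpace X] (γ : ℝ → X) : Prop :=
  ContinuousOn γ (Set.Icc 0 1) ∧ Set.InjOn γ (Set.Icc 0 1)

/-- A set `U` is arcwise connected if any two distinct points of `U` are joined by an arc
contained in `U`. -/
def ArcConnected {X : Type*} [MetricSpace X] (U : Set X) : Prop :=
  ∀ x ∈ U, ∀ y ∈ U, x ≠ y →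
    ∃ c : ℝ → X, IsArc c ∧ c 0 = x ∧ c 1 = y ∧ c '' Set.Icc 0 1 ⊆ U

/-- `X` is `L`-annularly linearly connected: (BT) any two points lie in a continuum of
diameter at most `L` times their distance, and (ALC2) for `0 < r`, `2r ≤ R ≤ diam X`, any
two points of `B(x,R) ∖ B(x,r)` are joined by a continuum inside `B(x,LR) ∖ B(x,r/L)`. -/
def IsALC (L : ℝ) (X : Type*) [MetricSpace X] : Prop :=
  (∀ x y : X, ∃ K : Set X, IsCompact K ∧ IsConnected K ∧ x ∈ K ∧ y ∈ K ∧
      Metric.diam K ≤ L * dist x y) ∧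
  (∀ (x : X) (r R : ℝ), 0 < r → 2 * r ≤ R →
      ENNReal.ofReal R ≤ EMetric.diam (Set.univ : Set X) →
      ∀ y ∈ Metric.ball x R \ Metric.ball x r, ∀ z ∈ Metric.ball x R \ Metric.ball x r,
        ∃ K : Set X, IsCompact K ∧ IsConnected K ∧ y ∈ K ∧ z ∈ K ∧
          K ⊆ Metric.ball x (L * R) \ Metric.ball x (r / L))

lemma locallyConnectedSpace_of_bounded_turning {X : Type*} [MetricSpace X] {L : ℝ}
    (hL : 0 < L)
    (hBT : ∀ x y : X, ∃ K : Set X, IsCompact K ∧ IsConnected K ∧ x ∈ K ∧ y ∈ K ∧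
      diam K ≤ L * dist x y) :
    LocallyConnectedSpace X := by
  rw [locallyConnectedSpace_iff_connected_subsets]
  intro x U hU
  obtain ⟨ε, hε, hballU⟩ := Metric.mem_nhds_iff.1 hU
  choose C hC_compact hC_conn hxC hyC hC_diam using hBT x
  refine ⟨⋃ y : ball x (ε / L), C y, ?_, ?_, ?_⟩
  · exact Filter.mem_of_superset (ball_mem_nhds x (div_pos hε hL))
      fun y hy => mem_iUnion.2 ⟨⟨y, hy⟩, hyC y⟩
  · exact isPreconnected_iUnion ⟨x, mem_iInter.2 fun y => hxC y⟩
      fun y => (hC_conn y).isPreconnected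
  · refine iUnion_subset fun y z hz => hballU (mem_ball.2 ?_)
    calc dist z x ≤ diam (C y) := dist_le_diam_of_mem (hC_compact y).isBounded hz (hxC y)
      _ ≤ L * dist x y := hC_diam y
      _ < L * (ε / L) := by gcongr; rw [dist_comm]; exact y.2
      _ = ε := by field_simp

lemma IsALC.mem_connectedComponentIn_compl {X : Type*} [MetricSpace X] {L : ℝ}
    (hALC : IsALC L X) (hunbd : ediam (univ : Set X) = ⊤)
    {S : Set X} {x y z : X} {r : ℝ} (hr : 0 < r) (hS : S ⊆ ball x (r / L))
    (hy : r ≤ dist x y) (hz : r ≤ dist x z) :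
    z ∈ connectedComponentIn Sᶜ y := by
  set R := max (2 * r) (max (dist x y) (dist x z)) + 1
  have h2r : 2 * r ≤ R := by linarith [le_max_left (2 * r) (max (dist x y) (dist x z))]
  have hyR : dist x y < R := by
    linarith [le_max_right (2 * r) (max (dist x y) (dist x z)),
      le_max_left (dist x y) (dist x z)]
  have hzR : dist x z < R := by
    linarith [le_max_right (2 * r) (max (dist x y) (dist x z)),
      le_max_right (dist x y) (dist x z)]
  obtain ⟨M, -, hM_conn, hyM, hzM, hM_annulus⟩ :=
    hALC.2 x r R hr h2r (le_top.trans_eq hunbd.symm)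
      y ⟨mem_ball'.2 hyR, fun h => (mem_ball'.1 h).not_ge hy⟩
      z ⟨mem_ball'.2 hzR, fun h => (mem_ball'.1 h).not_ge hz⟩
  have hMS : M ⊆ Sᶜ := fun m hm hmS => (hM_annulus hm).2 (hS hmS)
  exact hM_conn.isPreconnected.subset_connectedComponentIn hyM hMS hzM

lemma exists_lt_dist_of_ediam_univ_eq_top {X : Type*} [MetricSpace X]
    (hunbd : ediam (univ : Set X) = ⊤) (x : X) (r : ℝ) :
    ∃ y : X, r < dist x y := by
  by_contra! h
  refine (isBounded_iff_subset_closedBall x).2 ⟨r, fun y _ => ?_⟩ |>.ediam_ne_top hunbd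
  rw [mem_closedBall, dist_comm]
  exact h y

/-- Filling-in: in an unbounded proper `L`-ALC space, all points at distance greater than
`2L·diam K` from a point `x ∈ K` lie in one connected component `Ω` of `X ∖ K`, and the
filling-in `X ∖ Ω = K ∪ (other components)` is compact and contained in
`closedBall x (2L·diam K)`. -/
theorem stmt13 {X : Type*} [MetricSpace X] [ProperSpace X]
    (hunbd : EMetric.diam (Set.univ : Set X) = ⊤)
    (L : ℝ) (hL : 1 ≤ L) (hALC : IsALC L X)
    (K : Set X) (hK : IsCompact K) (hKdiam : 0 < Metric.diam K)
    (x : X) (hx : x ∈ K) :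
    ∃ Ω : Set X,
      (∀ y : X, 2 * L * Metric.diam K < dist x y →
        y ∈ Ω ∧ Ω = connectedComponentIn Kᶜ y) ∧
      IsCompact Ωᶜ ∧ Ωᶜ ⊆ Metric.closedBall x (2 * L * Metric.diam K) := by
  have hL0 : 0 < L := one_pos.trans_le hL
  have := locallyConnectedSpace_of_bounded_turning hL0 hALC.1
  set r := 2 * L * diam K
  have hr : 0 < r := by positivity
  have hK_ball : K ⊆ ball x (r / L) := fun k hk => by
    have : dist k x ≤ diam K := dist_le_diam_of_mem hK.isBounded hk hx
    rw [mem_ball, show r / L = 2 * diam K by field_simp [r]; ring]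
    linarith
  obtain ⟨y₀, hy₀⟩ := exists_lt_dist_of_ediam_univ_eq_top hunbd x r
  set Ω := connectedComponentIn Kᶜ y₀
  have h_far : ∀ y, r < dist x y → y ∈ Ω := fun y hy =>
    hALC.mem_connectedComponentIn_compl hunbd hr hK_ball hy₀.le hy.le
  have hΩc_ball : Ωᶜ ⊆ closedBall x r := compl_subset_comm.2 fun y hy =>
    h_far y (by rw [mem_compl_iff, mem_closedBall, not_le, dist_comm] at hy; exact hy)
  refine ⟨Ω, fun y hy => ⟨h_far y hy, connectedComponentIn_eq (h_far y hy)⟩, ?_, hΩc_ball⟩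
  exact (isCompact_closedBall x r).of_isClosed_subset
    hK.isClosed.isOpen_compl.connectedComponentIn.isClosed_compl hΩc_ball
end

section
/- Let X be an unbounded, proper, L-annularly linearly connected metric space. Then the one-point (Alexandroff) compactification of X is a compact, Hausdorff, connected, and locally connected topological space. -/
/-!
(BT) makes `X` connected and locally connected: the continuum joining `x` to a nearby point `y`
stays within `L · d(x, y)` of `x`. Near `∞`, given a compact set inside `B(x, r)`, (ALC2) joins
any two points outside `B(x, L r)` by a continuum avoiding `B(x, r)`, so all of them lie in one
connected component of the complement of `B(x, r)`. Adding `∞` to the image of this component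
gives a connected neighbourhood of `∞`, since `∞` lies in its closure as `X` is unbounded.
-/

open Set Metric

open Filter Topology

namespace OnePoint

variable {X : Type*} [TopologicalSpace X]

theorem exists_isPreconnected_nhds_coe_subset [LocallyConnectedSpace X] (x : X)
    {U : Set (OnePoint X)} (hU : U ∈ 𝓝 (x : OnePoint X)) :
    ∃ V ∈ 𝓝 (x : OnePoint X), IsPreconnected V ∧ V ⊆ U := by
  rw [nhds_coe_eq, mem_map] at hU
  obtain ⟨V, hV, hVpc, hVU⟩ := locallyConnectedSpace_iff_connected_subsets.mp ‹_› x _ hU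
  exact ⟨(↑) '' V, nhds_coe_eq x ▸ image_mem_map hV,
    hVpc.image _ continuous_coe.continuousOn, image_subset_iff.mpr hVU⟩

theorem exists_isPreconnected_nhds_infty_subset [NoncompactSpace X]
    (h : ∀ s : Set X, IsCompact s → ∃ W, IsPreconnected W ∧ W ⊆ sᶜ ∧ W ∈ coclosedCompact X)
    {U : Set (OnePoint X)} (hU : U ∈ 𝓝 (∞ : OnePoint X)) :
    ∃ V ∈ 𝓝 (∞ : OnePoint X), IsPreconnected V ∧ V ⊆ U := by
  obtain ⟨s, ⟨-, hs⟩, hsU⟩ := hasBasis_nhds_infty.mem_iff.mp hU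
  obtain ⟨W, hWpc, hWs, hW⟩ := h s hs
  have hclosure : (∞ : OnePoint X) ∈ closure ((↑) '' W) :=
    mem_closure_of_tendsto tendsto_coe_infty (eventually_of_mem hW fun _ => mem_image_of_mem _)
  refine ⟨(↑) '' W ∪ {∞}, ?_, ?_, ?_⟩
  · rw [nhds_infty_eq]
    exact union_mem_sup (image_mem_map hW) rfl
  · exact (hWpc.image _ continuous_coe.continuousOn).subset_closure subset_union_left
      (union_subset subset_closure (singleton_subset_iff.mpr hclosure))
  · exact (union_subset_union_left _ (image_mono hWs)).trans hsU

theorem locallyConnectedSpace_of_exists_isPreconnected [LocallyConnectedSpace X]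
    [NoncompactSpace X]
    (h : ∀ s : Set X, IsCompact s → ∃ W, IsPreconnected W ∧ W ⊆ sᶜ ∧ W ∈ coclosedCompact X) :
    LocallyConnectedSpace (OnePoint X) := by
  refine locallyConnectedSpace_iff_connected_subsets.mpr fun x U hU => ?_
  induction x using OnePoint.rec with
  | infty => exact exists_isPreconnected_nhds_infty_subset h hU
  | coe x => exact exists_isPreconnected_nhds_coe_subset x hU

end OnePoint

namespace IsALC

variable {X : Type*} [MetricSpace X] {L : ℝ}

theorem preconnectedSpace (hALC : IsALC L X) : PreconnectedSpace X :=
  ⟨isPreconnected_of_forall_pair fun x _ y _ =>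
    let ⟨K, _, hK, hxK, hyK, _⟩ := hALC.1 x y
    ⟨K, subset_univ K, hxK, hyK, hK.isPreconnected⟩⟩

theorem mem_connectedComponentIn_ball (hALC : IsALC L X) (hL : 0 < L) {x y : X} {ε : ℝ}
    (hy : dist y x < ε / L) : y ∈ connectedComponentIn (ball x ε) x := by
  obtain ⟨K, hKc, hK, hxK, hyK, hKdiam⟩ := hALC.1 x y
  refine hK.isPreconnected.subset_connectedComponentIn hxK (fun w hw => ?_) hyK
  rw [mem_ball]
  calc dist w x ≤ diam K := dist_le_diam_of_mem hKc.isBounded hw hxK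
    _ ≤ L * dist x y := hKdiam
    _ < L * (ε / L) := by rw [dist_comm]; gcongr
    _ = ε := mul_div_cancel₀ ε hL.ne'

theorem locallyConnectedSpace (hALC : IsALC L X) (hL : 0 < L) : LocallyConnectedSpace X := by
  refine locallyConnectedSpace_iff_connected_subsets.mpr fun x U hU => ?_
  obtain ⟨ε, hε, hεU⟩ := Metric.mem_nhds_iff.mp hU
  exact ⟨connectedComponentIn (ball x ε) x,
    mem_of_superset (ball_mem_nhds x (div_pos hε hL))
      fun _ hy => hALC.mem_connectedComponentIn_ball hL hy,
    isPreconnected_connectedComponentIn, (connectedComponentIn_subset _ _).trans hεU⟩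

theorem mem_connectedComponentIn_compl_ball (hALC : IsALC L X) (hL : 0 < L)
    (hunbd : ediam (univ : Set X) = ⊤) {x y z : X} {r : ℝ} (hr : 0 < r)
    (hy : L * r ≤ dist y x) (hz : L * r ≤ dist z x) :
    z ∈ connectedComponentIn (ball x r)ᶜ y := by
  have hLr : 0 < L * r := mul_pos hL hr
  have hyx : 0 ≤ dist y x := dist_nonneg
  have hzx : 0 ≤ dist z x := dist_nonneg
  set R := 2 * (L * r) + dist y x + dist z x + 1 with hR
  have hy' : y ∈ ball x R \ ball x (L * r) := ⟨mem_ball.mpr (by linarith), by simpa using hy⟩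
  have hz' : z ∈ ball x R \ ball x (L * r) := ⟨mem_ball.mpr (by linarith), by simpa using hz⟩
  obtain ⟨K, -, hK, hyK, hzK, hKsub⟩ :=
    hALC.2 x (L * r) R hLr (by linarith) (le_top.trans_eq hunbd.symm) y hy' z hz'
  rw [mul_div_cancel_left₀ r hL.ne'] at hKsub
  exact hK.isPreconnected.subset_connectedComponentIn hyK (fun w hw => (hKsub hw).2) hzK

theorem exists_isPreconnected_compl_mem_cocompact [ProperSpace X] (hALC : IsALC L X)
    (hL : 0 < L) (hunbd : ediam (univ : Set X) = ⊤) {s : Set X} (hs : IsCompact s) :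
    ∃ W, IsPreconnected W ∧ W ⊆ sᶜ ∧ W ∈ cocompact X := by
  have : NoncompactSpace X := ediam_univ_eq_top_iff_noncompact.mp hunbd
  obtain ⟨x, -⟩ := Filter.nonempty_of_mem (univ_mem : univ ∈ cocompact X)
  obtain ⟨r, hr, hsr⟩ := hs.isBounded.subset_ball_lt 0 x
  have hfar : (closedBall x (L * r))ᶜ ∈ cocompact X :=
    (isCompact_closedBall x _).compl_mem_cocompact
  obtain ⟨y, hy⟩ := Filter.nonempty_of_mem hfar
  simp only [mem_compl_iff, mem_closedBall, not_le] at hy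
  refine ⟨connectedComponentIn (ball x r)ᶜ y, isPreconnected_connectedComponentIn,
    (connectedComponentIn_subset _ _).trans (compl_subset_compl.mpr hsr),
    mem_of_superset hfar fun z hz => ?_⟩
  simp only [mem_compl_iff, mem_closedBall, not_le] at hz
  exact hALC.mem_connectedComponentIn_compl_ball hL hunbd hr hy.le hz.le

end IsALC

/-- The one-point (Alexandroff) compactification of an unbounded, proper, `L`-annularly
linearly connected metric space is a compact, Hausdorff, connected and locally connected
topological space. -/
theorem stmt14 {X : Type*} [MetricSpace X] [ProperSpace X]
    (hunbd : EMetric.diam (Set.univ : Set X) = ⊤)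
    (L : ℝ) (hL : 1 ≤ L) (hALC : IsALC L X) :
    CompactSpace (OnePoint X) ∧ T2Space (OnePoint X) ∧
      ConnectedSpace (OnePoint X) ∧ LocallyConnectedSpace (OnePoint X) := by
  have hL0 : 0 < L := zero_lt_one.trans_le hL
  have : NoncompactSpace X := ediam_univ_eq_top_iff_noncompact.mp hunbd
  have := hALC.preconnectedSpace
  have := hALC.locallyConnectedSpace hL0
  refine ⟨inferInstance, inferInstance, inferInstance,
    OnePoint.locallyConnectedSpace_of_exists_isPreconnected fun s hs => ?_⟩
  rw [coclosedCompact_eq_cocompact]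
  exact hALC.exists_isPreconnected_compl_mem_cocompact hL0 hunbd hs
end

section
/- Let X be a metric space, I ⊆ ℝ an interval, γ : I → X a 1-Lipschitz map, and t an interior point of I. If lim_{h→0} d(γ(t+h),γ(t−h))/(2|h|) = 1, then lim_{h→0} d(γ(t+h),γ(t))/|h| = 1 (limits taken over h ≠ 0 with t ± h ∈ I). -/
/-!
Near an interior point `t` every small `h` has `t ± h ∈ I`. There the triangle inequality through
`γ t` and the Lipschitz bound `d(γ t, γ(t-h)) ≤ |h|` give
`2 · d(γ(t+h), γ(t-h)) / (2|h|) - 1 ≤ d(γ(t+h), γ t) / |h| ≤ 1`,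
and the left-hand side tends to `1`.
-/

open Filter Topology

lemma eventually_add_mem_of_mem_interior {I : Set ℝ} {t : ℝ} (ht : t ∈ interior I) :
    ∀ᶠ h in 𝓝 0, t + h ∈ I :=
  ((continuous_const_add t).tendsto' 0 t (add_zero t)).eventually
    (mem_interior_iff_mem_nhds.mp ht)

lemma eventually_sub_mem_of_mem_interior {I : Set ℝ} {t : ℝ} (ht : t ∈ interior I) :
    ∀ᶠ h in 𝓝 0, t - h ∈ I :=
  ((continuous_sub_left t).tendsto' 0 t (sub_zero t)).eventually
    (mem_interior_iff_mem_nhds.mp ht)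

lemma nhdsWithin_ne_inter_of_mem_nhds {s : Set ℝ} (hs : s ∈ 𝓝 (0 : ℝ)) :
    𝓝[{h | h ≠ 0} ∩ s] 0 = 𝓝[≠] 0 :=
  nhdsWithin_inter_of_mem' (mem_nhdsWithin_of_mem_nhds hs)

section LipschitzCurve

variable {X : Type*} [PseudoMetricSpace X] {I : Set ℝ} {γ : ℝ → X}

lemma LipschitzOnWith.dist_add_le_abs (hγ : LipschitzOnWith 1 γ I) {t h : ℝ}
    (ht : t ∈ I) (hth : t + h ∈ I) : dist (γ (t + h)) (γ t) ≤ |h| := by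
  simpa [Real.dist_eq] using hγ.dist_le_mul (t + h) hth t ht

lemma LipschitzOnWith.dist_add_sub_sub_abs_le (hγ : LipschitzOnWith 1 γ I) {t h : ℝ}
    (ht : t ∈ I) (hth : t - h ∈ I) :
    dist (γ (t + h)) (γ (t - h)) - |h| ≤ dist (γ (t + h)) (γ t) := by
  have hback : dist (γ t) (γ (t - h)) ≤ |h| := by
    simpa [Real.dist_eq, abs_sub_comm] using hγ.dist_le_mul t ht (t - h) hth
  linarith [dist_triangle (γ (t + h)) (γ t) (γ (t - h))]

lemma LipschitzOnWith.two_mul_symmetric_quotient_sub_one_le (hγ : LipschitzOnWith 1 γ I)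
    {t h : ℝ} (ht : t ∈ I) (hth : t - h ∈ I) (hh : h ≠ 0) :
    2 * (dist (γ (t + h)) (γ (t - h)) / (2 * |h|)) - 1 ≤ dist (γ (t + h)) (γ t) / |h| := by
  have habs : 0 < |h| := abs_pos.mpr hh
  calc 2 * (dist (γ (t + h)) (γ (t - h)) / (2 * |h|)) - 1
      = (dist (γ (t + h)) (γ (t - h)) - |h|) / |h| := by field_simp
    _ ≤ dist (γ (t + h)) (γ t) / |h| := by
      gcongr
      exact hγ.dist_add_sub_sub_abs_le ht hth

end LipschitzCurve

theorem stmt16_general {X : Type*} [MetricSpace X] (I : Set ℝ)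
    (γ : ℝ → X) (hγ : LipschitzOnWith 1 γ I)
    (t : ℝ) (ht : t ∈ interior I)
    (hlim : Tendsto (fun h : ℝ => dist (γ (t + h)) (γ (t - h)) / (2 * |h|))
      (nhdsWithin 0 {h : ℝ | h ≠ 0 ∧ t + h ∈ I ∧ t - h ∈ I}) (nhds 1)) :
    Tendsto (fun h : ℝ => dist (γ (t + h)) (γ t) / |h|)
      (nhdsWithin 0 {h : ℝ | h ≠ 0 ∧ t + h ∈ I}) (nhds 1) := by
  have hadd := eventually_add_mem_of_mem_interior ht
  have hsub := eventually_sub_mem_of_mem_interior ht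
  have htI : t ∈ I := interior_subset ht
  change Tendsto _ (𝓝[{h | h ≠ 0} ∩ {h | t + h ∈ I ∧ t - h ∈ I}] 0) _ at hlim
  change Tendsto _ (𝓝[{h | h ≠ 0} ∩ {h | t + h ∈ I}] 0) _
  rw [nhdsWithin_ne_inter_of_mem_nhds (hadd.and hsub)] at hlim
  rw [nhdsWithin_ne_inter_of_mem_nhds hadd]
  have hlower := (hlim.const_mul 2).sub_const 1
  rw [show (2 : ℝ) * 1 - 1 = 1 by norm_num] at hlower
  refine tendsto_of_tendsto_of_tendsto_of_le_of_le' hlower tendsto_const_nhds ?_ ?_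
  · filter_upwards [eventually_nhdsWithin_of_eventually_nhds hsub, self_mem_nhdsWithin]
      with h hth hh
    exact hγ.two_mul_symmetric_quotient_sub_one_le htI hth hh
  · filter_upwards [eventually_nhdsWithin_of_eventually_nhds hadd, self_mem_nhdsWithin]
      with h hth hh
    exact div_le_one_of_le₀ (hγ.dist_add_le_abs htI hth) (abs_nonneg h)

/-- If a 1-Lipschitz curve `γ : I → X` satisfies
`d(γ(t+h),γ(t−h))/(2|h|) → 1` as `h → 0` at an interior point `t` of the interval `I`,
then also `d(γ(t+h),γ(t))/|h| → 1` as `h → 0`. -/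
theorem stmt16 {X : Type*} [MetricSpace X] (I : Set ℝ) (hI : I.OrdConnected)
    (γ : ℝ → X) (hγ : LipschitzOnWith 1 γ I)
    (t : ℝ) (ht : t ∈ interior I)
    (hlim : Tendsto (fun h : ℝ => dist (γ (t + h)) (γ (t - h)) / (2 * |h|))
      (nhdsWithin 0 {h : ℝ | h ≠ 0 ∧ t + h ∈ I ∧ t - h ∈ I}) (nhds 1)) :
    Tendsto (fun h : ℝ => dist (γ (t + h)) (γ t) / |h|)
      (nhdsWithin 0 {h : ℝ | h ≠ 0 ∧ t + h ∈ I}) (nhds 1) :=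
  stmt16_general I γ hγ t ht hlim
end

section
/- For every α ∈ (0,1], the function d_α((x₁,x₂),(y₁,y₂)) = |x₁−y₁| + |x₂−y₂|^α is a metric on ℝ², and the Hausdorff dimension of ℝ² equipped with the metric d_α equals 1 + 1/α. -/
/-!
A `d_α`-ball of radius `r` is comparable to an `r × r^(1/α)` rectangle. Hence Lebesgue measure
satisfies `λ t ≤ 4 (diam t)^(1 + 1/α)`, and the mass distribution principle gives
`dimH ≥ 1 + 1/α`. Conversely, a unit square is covered by about `n^(1 + 1/α)` rectangles of size
`1/n × n^(-1/α)`, each of `d_α`-diameter at most `2/n`, so `μH[d]` vanishes for `d > 1 + 1/α`.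
-/

open Set

noncomputable def dalpha (α : ℝ) (p q : ℝ × ℝ) : ℝ :=
  |p.1 - q.1| + |p.2 - q.2| ^ α

open MeasureTheory Filter Topology Metric
open scoped NNReal ENNReal

section HausdorffMeasure

variable {X : Type*} [EMetricSpace X] [MeasurableSpace X] [BorelSpace X]

theorem hausdorffMeasure_eq_zero_of_finite_covers {β : Type*} {l : Filter β} [l.NeBot]
    {ι : β → Type*} [∀ n, Fintype (ι n)] {d : ℝ} (hd : 0 ≤ d) (s : Set X) (r : β → ℝ≥0∞)
    (hr : Tendsto r l (𝓝 0)) (t : ∀ n, ι n → Set X) (ht : ∀ᶠ n in l, ∀ i, ediam (t n i) ≤ r n)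
    (hst : ∀ᶠ n in l, s ⊆ ⋃ i, t n i)
    (hsum : Tendsto (fun n => Fintype.card (ι n) * r n ^ d) l (𝓝 0)) : μH[d] s = 0 := by
  refine le_antisymm ?_ zero_le
  calc μH[d] s ≤ liminf (fun n => ∑ i, ediam (t n i) ^ d) l :=
        Measure.hausdorffMeasure_le_liminf_sum d s r hr t ht hst
    _ ≤ liminf (fun n => Fintype.card (ι n) * r n ^ d) l := by
        refine liminf_le_liminf (ht.mono fun n hn => ?_)
        calc ∑ i, ediam (t n i) ^ d ≤ ∑ _i : ι n, r n ^ d :=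
              Finset.sum_le_sum fun i _ => ENNReal.rpow_le_rpow (hn i) hd
          _ = _ := by simp
    _ = 0 := hsum.liminf_eq

theorem le_dimH_of_measure_le_mul_ediam_rpow (μ : Measure X) {C : ℝ≥0∞} (hC : C ≠ ∞) {d : ℝ}
    (hd : 0 ≤ d) (h : ∀ t, μ t ≤ C * ediam t ^ d) {s : Set X} (hs : μ s ≠ 0) :
    ENNReal.ofReal d ≤ dimH s := by
  have hle : C⁻¹ • μ ≤ μH[d] := by
    refine Measure.le_hausdorffMeasure d _ ∞ ENNReal.zero_lt_top fun t _ => ?_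
    calc C⁻¹ * μ t ≤ C⁻¹ * (C * ediam t ^ d) := by gcongr; exact h t
      _ = C⁻¹ * C * ediam t ^ d := (mul_assoc _ _ _).symm
      _ ≤ 1 * ediam t ^ d := by gcongr; exact ENNReal.inv_mul_le_one C
      _ = ediam t ^ d := one_mul _
  refine le_dimH_of_hausdorffMeasure_ne_zero fun h0 => hs ?_
  rw [Real.coe_toNNReal d hd] at h0
  have hμ : C⁻¹ * μ s ≤ 0 := h0 ▸ hle s
  simpa [hC] using hμ

end HausdorffMeasure

theorem Ico_subset_iUnion_Icc_div (a : ℝ) {N : ℕ} (hN : 0 < N) :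
    Ico a (a + 1) ⊆ ⋃ i : Fin N, Icc (a + i / N) (a + i / N + 1 / N) := by
  intro x ⟨hax, hxa⟩
  have hN' : (0 : ℝ) < N := Nat.cast_pos.2 hN
  have hy : 0 ≤ (x - a) * N := mul_nonneg (sub_nonneg.2 hax) hN'.le
  set i := ⌊(x - a) * N⌋₊
  have hi : i < N := (Nat.floor_lt hy).2 (by nlinarith)
  have hlo : (i : ℝ) / N ≤ x - a := (div_le_iff₀ hN').2 (Nat.floor_le hy)
  have hhi : x - a ≤ i / N + 1 / N := by
    rw [← add_div]
    exact (le_div_iff₀ hN').2 (Nat.lt_floor_add_one _).le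
  exact mem_iUnion.2 ⟨⟨i, hi⟩, by dsimp only; linarith, by dsimp only; linarith⟩

theorem iUnion_Ico_prod_Ico_intCast :
    ⋃ z : ℤ × ℤ, Ico (z.1 : ℝ) (z.1 + 1) ×ˢ Ico (z.2 : ℝ) (z.2 + 1) = univ := by
  rw [iUnion_prod (fun n : ℤ => Ico (n : ℝ) (n + 1)) (fun n : ℤ => Ico (n : ℝ) (n + 1)),
    iUnion_Ico_intCast, univ_prod_univ]

theorem tendsto_natCast_mul_natCeil_rpow_mul_rpow {β d : ℝ} (hβ : 0 ≤ β) (hd : 1 + β < d) :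
    Tendsto (fun n : ℕ => (n : ℝ) * ⌈(n : ℝ) ^ β⌉₊ * (2 / n) ^ d) atTop (𝓝 0) := by
  have hlim : Tendsto (fun n : ℕ => 2 ^ (d + 1) * (n : ℝ) ^ (-(d - (1 + β)))) atTop (𝓝 0) := by
    simpa using ((tendsto_rpow_neg_atTop (sub_pos.2 hd)).comp
      tendsto_natCast_atTop_atTop).const_mul (2 ^ (d + 1))
  refine squeeze_zero' (.of_forall fun n => by positivity) ?_ hlim
  filter_upwards [eventually_ge_atTop 1] with n hn
  have hn' : (0 : ℝ) < n := Nat.cast_pos.2 hn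
  have hceil : (⌈(n : ℝ) ^ β⌉₊ : ℝ) ≤ 2 * (n : ℝ) ^ β := by
    have := Nat.ceil_lt_add_one (by positivity : (0 : ℝ) ≤ (n : ℝ) ^ β)
    have := Real.one_le_rpow (Nat.one_le_cast.2 hn) hβ
    linarith
  calc (n : ℝ) * ⌈(n : ℝ) ^ β⌉₊ * (2 / n) ^ d ≤ n * (2 * (n : ℝ) ^ β) * (2 / n) ^ d := by
        gcongr
    _ = 2 ^ (d + 1) * (n : ℝ) ^ (-(d - (1 + β))) := by
        rw [Real.div_rpow zero_le_two hn'.le, Real.rpow_add_one two_ne_zero, neg_sub,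
          Real.rpow_sub hn', Real.rpow_one_add' hn'.le (by positivity)]
        field_simp

section dalpha

variable {α : ℝ}

theorem dalpha_comm (p q : ℝ × ℝ) : dalpha α p q = dalpha α q p := by
  simp only [dalpha, abs_sub_comm]

theorem dalpha_eq_zero_iff (hα : α ≠ 0) {p q : ℝ × ℝ} : dalpha α p q = 0 ↔ p = q := by
  rw [dalpha, add_eq_zero_iff_of_nonneg (abs_nonneg _) (by positivity),
    Real.rpow_eq_zero (abs_nonneg _) hα, abs_eq_zero, abs_eq_zero, sub_eq_zero, sub_eq_zero,
    Prod.ext_iff]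

theorem dalpha_self (hα : α ≠ 0) (p : ℝ × ℝ) : dalpha α p p = 0 :=
  (dalpha_eq_zero_iff hα).2 rfl

theorem dalpha_triangle (h0 : 0 ≤ α) (h1 : α ≤ 1) (p q r : ℝ × ℝ) :
    dalpha α p r ≤ dalpha α p q + dalpha α q r := by
  have hfst : |p.1 - r.1| ≤ |p.1 - q.1| + |q.1 - r.1| := abs_sub_le _ _ _
  have hsnd : |p.2 - r.2| ^ α ≤ |p.2 - q.2| ^ α + |q.2 - r.2| ^ α :=
    calc |p.2 - r.2| ^ α ≤ (|p.2 - q.2| + |q.2 - r.2|) ^ α :=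
          Real.rpow_le_rpow (abs_nonneg _) (abs_sub_le _ _ _) h0
      _ ≤ _ := Real.rpow_add_le_add_rpow (abs_nonneg _) (abs_nonneg _) h0 h1
  simp only [dalpha]
  linarith

theorem abs_fst_sub_le_dalpha (p q : ℝ × ℝ) : |p.1 - q.1| ≤ dalpha α p q :=
  le_add_of_nonneg_right (by positivity)

theorem abs_snd_sub_le_dalpha_rpow (hα : 0 < α) (p q : ℝ × ℝ) :
    |p.2 - q.2| ≤ dalpha α p q ^ α⁻¹ := by
  have h : |p.2 - q.2| ^ α ≤ dalpha α p q := le_add_of_nonneg_left (abs_nonneg _)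
  calc |p.2 - q.2| = (|p.2 - q.2| ^ α) ^ α⁻¹ := by
        rw [← Real.rpow_mul (abs_nonneg _), mul_inv_cancel₀ hα.ne', Real.rpow_one]
    _ ≤ dalpha α p q ^ α⁻¹ := Real.rpow_le_rpow (by positivity) h (inv_nonneg.2 hα.le)

theorem dalpha_le_of_abs_sub_le (hα : 0 ≤ α) {p q : ℝ × ℝ} {h k : ℝ}
    (h₁ : |p.1 - q.1| ≤ h) (h₂ : |p.2 - q.2| ≤ k) : dalpha α p q ≤ h + k ^ α :=
  add_le_add h₁ (Real.rpow_le_rpow (abs_nonneg _) h₂ hα)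

theorem continuous_dalpha (hα : 0 < α) (p : ℝ × ℝ) : Continuous (dalpha α p) := by
  unfold dalpha
  fun_prop (disch := exact hα.le)

theorem isOpen_iff_forall_dalpha_lt (hα : 0 < α) (s : Set (ℝ × ℝ)) :
    IsOpen s ↔ ∀ p ∈ s, ∃ ε > 0, ∀ q, dalpha α p q < ε → q ∈ s := by
  refine ⟨fun hs p hp => ?_, fun H => isOpen_iff_forall_mem_open.2 fun p hp => ?_⟩
  · obtain ⟨δ, hδ, hball⟩ := Metric.isOpen_iff.1 hs p hp
    refine ⟨min δ (δ ^ α), by positivity, fun q hq => hball ?_⟩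
    have hsnd : |p.2 - q.2| < δ :=
      calc |p.2 - q.2| ≤ dalpha α p q ^ α⁻¹ := abs_snd_sub_le_dalpha_rpow hα p q
        _ < (δ ^ α) ^ α⁻¹ := Real.rpow_lt_rpow ((abs_nonneg _).trans (abs_fst_sub_le_dalpha p q))
            (hq.trans_le (min_le_right _ _)) (inv_pos.2 hα)
        _ = δ := Real.rpow_rpow_inv hδ.le hα.ne'
    rw [mem_ball, Prod.dist_eq, Real.dist_eq, Real.dist_eq, abs_sub_comm, abs_sub_comm q.2]
    exact max_lt ((abs_fst_sub_le_dalpha p q).trans_lt (hq.trans_le (min_le_left _ _))) hsnd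
  · obtain ⟨ε, hε, hsub⟩ := H p hp
    exact ⟨{q | dalpha α p q < ε}, hsub, isOpen_lt (continuous_dalpha hα p) continuous_const,
      by simpa [dalpha_self hα.ne'] using hε⟩

noncomputable abbrev dalphaMetricSpace (hα : α ∈ Ioc 0 1) : MetricSpace (ℝ × ℝ) :=
  MetricSpace.ofDistTopology (dalpha α) (dalpha_self hα.1.ne') dalpha_comm
    (dalpha_triangle hα.1.le hα.2) (isOpen_iff_forall_dalpha_lt hα.1)
    fun _ _ => (dalpha_eq_zero_iff hα.1.ne').1

end dalpha

/-- `ℝ × ℝ` carrying the metric `d_α` instead of the sup metric. Its topology is, by construction,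
the product topology, so Lebesgue measure lives on its Borel sets. -/
def DalphaPlane (_α : ℝ) : Type := ℝ × ℝ

namespace DalphaPlane

variable (α : ℝ) [hα : Fact (α ∈ Ioc (0 : ℝ) 1)]

noncomputable instance : MetricSpace (DalphaPlane α) := dalphaMetricSpace hα.out

noncomputable instance : MeasureSpace (DalphaPlane α) := inferInstanceAs (MeasureSpace (ℝ × ℝ))

instance : BorelSpace (DalphaPlane α) := inferInstanceAs (BorelSpace (ℝ × ℝ))

variable {α}

theorem edist_eq (p q : DalphaPlane α) : edist p q = ENNReal.ofReal (dalpha α p q) :=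
  edist_dist p q

theorem ediam_Icc_prod_Icc_le (a b : ℝ) {h k : ℝ} :
    ediam (X := DalphaPlane α) (Icc a (a + h) ×ˢ Icc b (b + k)) ≤ ENNReal.ofReal (h + k ^ α) := by
  refine ediam_le ?_
  rintro p ⟨⟨hp₁, hp₁'⟩, hp₂, hp₂'⟩ q ⟨⟨hq₁, hq₁'⟩, hq₂, hq₂'⟩
  rw [edist_eq]
  refine ENNReal.ofReal_le_ofReal (dalpha_le_of_abs_sub_le hα.out.1.le ?_ ?_) <;>
    exact abs_sub_le_iff.2 ⟨by linarith, by linarith⟩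

theorem volume_le_mul_ediam_rpow (t : Set (DalphaPlane α)) :
    volume t ≤ 4 * ediam t ^ (1 + α⁻¹) := by
  have hβ : 0 < α⁻¹ := inv_pos.2 hα.out.1
  rcases t.eq_empty_or_nonempty with rfl | ⟨p, hp⟩
  · simp
  rcases eq_top_or_lt_top (ediam t) with htop | hfin
  · simp [htop, ENNReal.top_rpow_of_pos (by positivity : 0 < 1 + α⁻¹)]
  set d := (ediam t).toReal
  have hd : 0 ≤ d := ENNReal.toReal_nonneg
  have hsub : t ⊆ Icc (p.1 - d) (p.1 + d) ×ˢ Icc (p.2 - d ^ α⁻¹) (p.2 + d ^ α⁻¹) := by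
    intro q hq
    have hdist : dalpha α p q ≤ d := by
      rw [← ENNReal.ofReal_le_iff_le_toReal hfin.ne, ← edist_eq]
      exact edist_le_ediam_of_mem hp hq
    have h₁ := abs_sub_le_iff.1 ((abs_fst_sub_le_dalpha p q).trans hdist)
    have h₂ := abs_sub_le_iff.1 ((abs_snd_sub_le_dalpha_rpow hα.out.1 p q).trans
      (Real.rpow_le_rpow ((abs_nonneg _).trans (abs_fst_sub_le_dalpha p q)) hdist hβ.le))
    exact ⟨⟨by linarith, by linarith⟩, by linarith, by linarith⟩
  calc volume t ≤ volume (Icc (p.1 - d) (p.1 + d) ×ˢ Icc (p.2 - d ^ α⁻¹) (p.2 + d ^ α⁻¹)) :=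
        measure_mono hsub
    _ = ENNReal.ofReal (2 * d) * ENNReal.ofReal (2 * d ^ α⁻¹) := by
        rw [Measure.volume_eq_prod, Measure.prod_prod, Real.volume_Icc, Real.volume_Icc]
        ring_nf
    _ = 4 * ediam t ^ (1 + α⁻¹) := by
        rw [← ENNReal.ofReal_mul (by positivity), mul_mul_mul_comm,
          ← Real.rpow_one_add' hd (by positivity), ENNReal.ofReal_mul (by norm_num),
          ← ENNReal.ofReal_rpow_of_nonneg hd (by positivity), ENNReal.ofReal_toReal hfin.ne]
        norm_num

theorem hausdorffMeasure_Ico_prod_Ico_eq_zero {d : ℝ} (hd : 1 + α⁻¹ < d) (a b : ℝ) :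
    (μH[d] : Measure (DalphaPlane α)) (Ico a (a + 1) ×ˢ Ico b (b + 1)) = 0 := by
  have hβ : 0 < α⁻¹ := inv_pos.2 hα.out.1
  set N : ℕ → ℕ := fun n => ⌈(n : ℝ) ^ α⁻¹⌉₊
  refine hausdorffMeasure_eq_zero_of_finite_covers (l := atTop) (by linarith) _
    (fun n : ℕ => ENNReal.ofReal (2 / n)) ?_
    (fun n (ij : Fin n × Fin (N n)) => Icc (a + ij.1 / n) (a + ij.1 / n + 1 / n) ×ˢ
      Icc (b + ij.2 / N n) (b + ij.2 / N n + 1 / N n)) ?_ ?_ ?_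
  · simpa using ENNReal.tendsto_ofReal (tendsto_const_div_atTop_nhds_zero_nat 2)
  · filter_upwards [eventually_ge_atTop 1] with n hn ij
    have hn' : (0 : ℝ) < n := Nat.cast_pos.2 hn
    have hN : ((1 : ℝ) / N n) ^ α ≤ 1 / n :=
      calc ((1 : ℝ) / N n) ^ α ≤ (1 / (n : ℝ) ^ α⁻¹) ^ α := by
            gcongr
            · exact hα.out.1.le
            · exact Nat.le_ceil _
        _ = 1 / n := by
            rw [one_div, one_div, Real.inv_rpow (by positivity),
              Real.rpow_inv_rpow hn'.le hα.out.1.ne']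
    refine (ediam_Icc_prod_Icc_le _ _).trans (ENNReal.ofReal_le_ofReal ?_)
    have : (2 : ℝ) / n = 1 / n + 1 / n := by ring
    linarith
  · filter_upwards [eventually_ge_atTop 1] with n hn
    have hN : 0 < N n := Nat.ceil_pos.2 (by positivity)
    exact (prod_mono (Ico_subset_iUnion_Icc_div a hn) (Ico_subset_iUnion_Icc_div b hN)).trans
      (iUnion_prod _ _).ge
  · have h := ENNReal.tendsto_ofReal (tendsto_natCast_mul_natCeil_rpow_mul_rpow hβ.le hd)
    rw [ENNReal.ofReal_zero] at h
    refine h.congr fun n => ?_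
    rw [ENNReal.ofReal_mul (by positivity), ← ENNReal.ofReal_rpow_of_nonneg (by positivity)
      (by linarith), ENNReal.ofReal_mul (by positivity)]
    simp [N]

theorem hausdorffMeasure_univ_eq_zero {d : ℝ} (hd : 1 + α⁻¹ < d) :
    (μH[d] : Measure (DalphaPlane α)) univ = 0 := by
  refine measure_mono_null iUnion_Ico_prod_Ico_intCast.ge ?_
  exact measure_iUnion_null fun z => hausdorffMeasure_Ico_prod_Ico_eq_zero hd _ _

theorem dimH_univ : dimH (univ : Set (DalphaPlane α)) = ENNReal.ofReal (1 + α⁻¹) := by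
  have hβ : 0 < α⁻¹ := inv_pos.2 hα.out.1
  refine le_antisymm (dimH_le fun d hd => le_of_not_gt fun hlt => ?_) ?_
  · have hlt' : 1 + α⁻¹ < d := by
      simpa using (ENNReal.ofReal_lt_iff_lt_toReal (by positivity) ENNReal.coe_ne_top).1 hlt
    simp [hausdorffMeasure_univ_eq_zero hlt'] at hd
  · refine le_dimH_of_measure_le_mul_ediam_rpow (X := DalphaPlane α) volume (C := 4) (by norm_num)
      (by positivity) volume_le_mul_ediam_rpow ?_
    exact Measure.measure_univ_ne_zero.2 (NeZero.ne (volume : Measure (ℝ × ℝ)))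

end DalphaPlane

/-- For `α ∈ (0,1]`, `d_α` is a metric on `ℝ²`, and the Hausdorff dimension of `ℝ²`
equipped with `d_α` equals `1 + 1/α`. -/
theorem stmt17 (α : ℝ) (hα : α ∈ Set.Ioc (0 : ℝ) 1) :
    (∀ p q : ℝ × ℝ, dalpha α p q = 0 ↔ p = q) ∧
    (∀ p q : ℝ × ℝ, dalpha α p q = dalpha α q p) ∧
    (∀ p q r : ℝ × ℝ, dalpha α p r ≤ dalpha α p q + dalpha α q r) ∧
    (∀ m : MetricSpace (ℝ × ℝ), (∀ p q : ℝ × ℝ, @dist _ m.toDist p q = dalpha α p q) →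
      @dimH (ℝ × ℝ) (@MetricSpace.toEMetricSpace _ m) Set.univ
        = ENNReal.ofReal (1 + 1 / α)) := by
  refine ⟨fun p q => dalpha_eq_zero_iff hα.1.ne', dalpha_comm, dalpha_triangle hα.1.le hα.2,
    fun m hm => ?_⟩
  have : Fact (α ∈ Ioc (0 : ℝ) 1) := ⟨hα⟩
  obtain rfl : m = dalphaMetricSpace hα := MetricSpace.ext (Dist.ext (funext₂ hm))
  rw [one_div]
  exact DalphaPlane.dimH_univ
end
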